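/- arXiv:1911.09260 — 4 statements merged into one kernel-verified Lean document; each statement's English description precedes it below -/
import Mathlib

section
/- Under the complier IV setting (consistency for treatment and outcome, exclusion restriction, causal IV, IV positivity, monotonicity, and P(C) > 0), the compliers' value function is nonparametrically identified: for every treatment regime 𝒟, E[ Z·A·Y·1{A=𝒟(L)} / f(Z|L) ] = P(A₁ > A₋₁) · 𝒱_c(𝒟); equivalently, 𝒱_c(𝒟) = E[ Z·A·Y·1{A=𝒟(L)} / ( P(A₁>A₋₁) · f(Z|L) ) ]. (Theorem 4.) -/
/-!
On `{Z = z}` consistency turns `Z A Y 1{A = 𝒟(L)}` into `z A_z Y_{A_z} 1{A_z = 𝒟(L)}`, a function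
of `(A₁, A₋₁, Y₁, Y₋₁, L)`. Since `Z` is conditionally independent of the potential variables
given `L`, the probability of `{Z = z}` given `L` and the potential variables is still `f(z|L)`;
so the weight `1{Z = z} / f(z|L)` integrates to one against every such function, and the
weighted expectation is `E[A₁ Y_{A₁} 1{A₁ = 𝒟}] - E[A₋₁ Y_{A₋₁} 1{A₋₁ = 𝒟}]`. Under monotonicity
the difference vanishes off the compliers and equals `Y_{𝒟(L)}` on them. Finally the
factorisation defining `E[Y_a | C, L]` and the tower property turn `E[Y_{𝒟(L)} 1_C]` into
`E[(1{𝒟 = 1} E[Y₁|C,L] + 1{𝒟 = -1} E[Y₋₁|C,L]) 1_C] = P(C) 𝒱_c(𝒟)`.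
-/

open MeasureTheory ProbabilityTheory

def mOf {Ω 𝓛 : Type*} [MeasurableSpace 𝓛] (L : Ω → 𝓛) : MeasurableSpace Ω :=
  MeasurableSpace.comap L inferInstance

section PullOut

variable {Ω : Type*} {m mΩ : MeasurableSpace Ω} {μ : Measure Ω} {X : Ω → ℝ}

theorem integral_withDensity_ofReal (hX : AEMeasurable X μ) (hX0 : 0 ≤ᵐ[μ] X) (k : Ω → ℝ) :
    ∫ ω, k ω ∂μ.withDensity (fun ω => ENNReal.ofReal (X ω)) = ∫ ω, X ω * k ω ∂μ := by
  rw [integral_withDensity_eq_integral_toReal_smul₀ hX.ennreal_ofReal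
    (.of_forall fun _ => ENNReal.ofReal_lt_top)]
  refine integral_congr_ae ?_
  filter_upwards [hX0] with ω hω
  rw [ENNReal.toReal_ofReal hω, smul_eq_mul]

theorem trim_withDensity_ofReal_condExp (hm : m ≤ mΩ) [SigmaFinite (μ.trim hm)]
    (hX : Integrable X μ) (hX0 : 0 ≤ᵐ[μ] X) :
    (μ.withDensity fun ω => ENNReal.ofReal (μ[X|m] ω)).trim hm
      = (μ.withDensity fun ω => ENNReal.ofReal (X ω)).trim hm := by
  refine @Measure.ext Ω m _ _ fun s hs => ?_
  rw [trim_measurableSet_eq hm hs, trim_measurableSet_eq hm hs,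
    withDensity_apply _ (hm s hs), withDensity_apply _ (hm s hs),
    ← ofReal_integral_eq_lintegral_ofReal integrable_condExp.restrict
      (ae_restrict_of_ae (condExp_nonneg hX0)),
    ← ofReal_integral_eq_lintegral_ofReal hX.restrict (ae_restrict_of_ae hX0),
    setIntegral_condExp hm hX hs]

/-- No integrability of `k` is needed: both sides integrate the `m`-measurable `k` against
measures that agree on `m`. -/
theorem integral_mul_condExp_of_nonneg (hm : m ≤ mΩ) [SigmaFinite (μ.trim hm)] {k : Ω → ℝ}
    (hk : Measurable[m] k) (hX : Integrable X μ) (hX0 : 0 ≤ᵐ[μ] X) :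
    ∫ ω, μ[X|m] ω * k ω ∂μ = ∫ ω, X ω * k ω ∂μ := by
  rw [← integral_withDensity_ofReal integrable_condExp.aemeasurable (condExp_nonneg hX0),
    ← integral_withDensity_ofReal hX.aemeasurable hX0,
    integral_trim hm hk.stronglyMeasurable, integral_trim hm hk.stronglyMeasurable,
    trim_withDensity_ofReal_condExp hm hX hX0]

end PullOut

theorem IsPiSystem.image2_inter {α : Type*} {p q : Set (Set α)} (hp : IsPiSystem p)
    (hq : IsPiSystem q) : IsPiSystem (Set.image2 (· ∩ ·) p q) := by
  rintro _ ⟨a, ha, b, hb, rfl⟩ _ ⟨a', ha', b', hb', rfl⟩ hne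
  have hswap : a ∩ b ∩ (a' ∩ b') = a ∩ a' ∩ (b ∩ b') := Set.inter_inter_inter_comm a b a' b'
  rw [hswap] at hne ⊢
  exact ⟨_, hp a ha a' ha' hne.left, _, hq b hb b' hb' hne.right, rfl⟩

theorem MeasurableSpace.sup_eq_generateFrom_image2_inter {α : Type*}
    (m₁ m₂ : MeasurableSpace α) :
    m₁ ⊔ m₂ = generateFrom
      (Set.image2 (· ∩ ·) {s | MeasurableSet[m₁] s} {t | MeasurableSet[m₂] t}) := by
  refine le_antisymm (sup_le ?_ ?_) (generateFrom_le ?_)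
  · exact fun s hs => measurableSet_generateFrom ⟨s, hs, Set.univ, .univ, Set.inter_univ s⟩
  · exact fun t ht => measurableSet_generateFrom ⟨Set.univ, .univ, t, ht, Set.univ_inter t⟩
  · rintro _ ⟨s, hs, t, ht, rfl⟩
    exact (le_sup_left (b := m₂) s hs).inter (le_sup_right (a := m₁) t ht)

theorem setIntegral_inter_eq_setIntegral_mul_indicator {α : Type*} {mα : MeasurableSpace α}
    {μ : Measure α} {a b : Set α} (hb : MeasurableSet b) (f : α → ℝ) :
    ∫ x in a ∩ b, f x ∂μ = ∫ x in a, f x * b.indicator 1 x ∂μ := by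
  rw [← setIntegral_indicator hb]
  congr 1 with x
  by_cases hx : x ∈ b <;> simp [hx]

@[fun_prop]
theorem Measurable.ite_eq {Ω : Type*} {m : MeasurableSpace Ω} {f g u v : Ω → ℝ}
    (hf : Measurable[m] f) (hg : Measurable[m] g) (hu : Measurable[m] u) (hv : Measurable[m] v) :
    Measurable[m] fun ω => if f ω = g ω then u ω else v ω :=
  Measurable.ite (measurableSet_eq_fun hf hg) hu hv

section CondIndep

variable {Ω : Type*} {m m₁ m₂ : MeasurableSpace Ω} {mΩ : MeasurableSpace Ω}
  [StandardBorelSpace Ω] {hm : m ≤ mΩ} {μ : Measure Ω} [IsFiniteMeasure μ] {E : Set Ω}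

theorem CondIndep.setIntegral_inter_condExp_indicator (h : CondIndep m m₁ m₂ hm μ)
    (hm₁ : m₁ ≤ mΩ) (hm₂ : m₂ ≤ mΩ) (hE : MeasurableSet[m₁] E) {a b : Set Ω}
    (ha : MeasurableSet[m] a) (hb : MeasurableSet[m₂] b) :
    ∫ ω in a ∩ b, (μ⟦E | m⟧) ω ∂μ = ∫ ω in a ∩ b, E.indicator 1 ω ∂μ := by
  have hb' : MeasurableSet b := hm₂ b hb
  have hEb : MeasurableSet (E ∩ b) := (hm₁ E hE).inter hb'
  have hbi : Integrable (b.indicator (1 : Ω → ℝ)) μ := (integrable_const 1).indicator hb'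
  have hEbi : Integrable (fun ω => (μ⟦E | m⟧) ω * b.indicator 1 ω) μ :=
    integrable_condExp.mul_bdd (c := 1) hbi.aestronglyMeasurable
      (.of_forall fun ω => by by_cases hω : ω ∈ b <;> simp [hω])
  have hpull : μ[fun ω => (μ⟦E | m⟧) ω * b.indicator 1 ω | m] =ᵐ[μ] μ⟦E | m⟧ * μ⟦b | m⟧ :=
    condExp_mul_of_stronglyMeasurable_left stronglyMeasurable_condExp hEbi hbi
  calc ∫ ω in a ∩ b, (μ⟦E | m⟧) ω ∂μ
      = ∫ ω in a, (μ⟦E | m⟧) ω * b.indicator 1 ω ∂μ :=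
        setIntegral_inter_eq_setIntegral_mul_indicator hb' _
    _ = ∫ ω in a, (μ⟦E | m⟧ * μ⟦b | m⟧) ω ∂μ := by
        rw [← setIntegral_condExp hm hEbi ha]
        exact setIntegral_congr_ae (hm a ha) (hpull.mono fun ω hω _ => hω)
    _ = ∫ ω in a, (μ⟦E ∩ b | m⟧) ω ∂μ :=
        setIntegral_congr_ae (hm a ha) <|
          ((condIndep_iff m m₁ m₂ hm hm₁ hm₂ μ).mp h E b hE hb).mono fun ω hω _ => hω.symm
    _ = ∫ ω in a, E.indicator 1 ω * b.indicator 1 ω ∂μ := by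
        rw [setIntegral_condExp hm ((integrable_const 1).indicator hEb) ha]
        simp [← Pi.one_def, Set.inter_indicator_one]
    _ = ∫ ω in a ∩ b, E.indicator 1 ω ∂μ :=
        (setIntegral_inter_eq_setIntegral_mul_indicator hb' _).symm

theorem CondIndep.condExp_indicator_sup (h : CondIndep m m₁ m₂ hm μ)
    (hm₁ : m₁ ≤ mΩ) (hm₂ : m₂ ≤ mΩ) (hE : MeasurableSet[m₁] E) :
    μ⟦E | m ⊔ m₂⟧ =ᵐ[μ] μ⟦E | m⟧ := by
  have hsup : m ⊔ m₂ ≤ mΩ := sup_le hm hm₂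
  have hmeas : StronglyMeasurable[m ⊔ m₂] (μ⟦E | m⟧) :=
    stronglyMeasurable_condExp.mono le_sup_left
  suffices hset : ∀ s, MeasurableSet[m ⊔ m₂] s →
      ∫ ω in s, (μ⟦E | m⟧) ω ∂μ = ∫ ω in s, E.indicator 1 ω ∂μ from
    (ae_eq_condExp_of_forall_setIntegral_eq hsup ((integrable_const 1).indicator (hm₁ E hE))
      (fun _ _ _ => integrable_condExp.integrableOn) (fun s hs _ => hset s hs)
      hmeas.aestronglyMeasurable).symm
  intro s hs
  induction s, hs using MeasurableSpace.induction_on_inter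
    (MeasurableSpace.sup_eq_generateFrom_image2_inter m m₂)
    ((@MeasurableSpace.isPiSystem_measurableSet Ω m).image2_inter
      (@MeasurableSpace.isPiSystem_measurableSet Ω m₂)) with
  | empty => simp
  | basic t ht =>
    obtain ⟨a, ha, b, hb, rfl⟩ := ht
    exact CondIndep.setIntegral_inter_condExp_indicator h hm₁ hm₂ hE ha hb
  | compl t ht ih =>
    rw [setIntegral_compl (hsup t ht) integrable_condExp,
      setIntegral_compl (hsup t ht) ((integrable_const 1).indicator (hm₁ E hE)), ih,
      integral_condExp hm]
    rfl
  | iUnion f hdisj hf ih =>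
    rw [integral_iUnion (fun i => hsup _ (hf i)) hdisj integrable_condExp.integrableOn,
      integral_iUnion (fun i => hsup _ (hf i)) hdisj
        ((integrable_const 1).indicator (hm₁ E hE)).integrableOn]
    exact tsum_congr ih

theorem CondIndep.integral_indicator_mul (h : CondIndep m m₁ m₂ hm μ)
    (hm₁ : m₁ ≤ mΩ) (hm₂ : m₂ ≤ mΩ) (hE : MeasurableSet[m₁] E) {ξ : Ω → ℝ}
    (hξ : Measurable[m ⊔ m₂] ξ) :
    ∫ ω, E.indicator 1 ω * ξ ω ∂μ = ∫ ω, (μ⟦E | m⟧) ω * ξ ω ∂μ := by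
  rw [← integral_mul_condExp_of_nonneg (X := E.indicator 1) (sup_le hm hm₂) hξ
    ((integrable_const 1).indicator (hm₁ E hE))
    (.of_forall (Set.indicator_nonneg fun _ _ => zero_le_one))]
  exact integral_congr_ae ((CondIndep.condExp_indicator_sup h hm₁ hm₂ hE).mono
    fun ω hω => congrArg (· * ξ ω) hω)

theorem CondIndep.integral_indicator_div_mul (h : CondIndep m m₁ m₂ hm μ)
    (hm₁ : m₁ ≤ mΩ) (hm₂ : m₂ ≤ mΩ) (hE : MeasurableSet[m₁] E) {g η : Ω → ℝ}
    (hgm : Measurable[m] g) (hg : μ⟦E | m⟧ =ᵐ[μ] g) (hg0 : ∀ᵐ ω ∂μ, g ω ≠ 0)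
    (hη : Measurable[m ⊔ m₂] η) :
    ∫ ω, E.indicator 1 ω / g ω * η ω ∂μ = ∫ ω, η ω ∂μ := by
  have hξ : Measurable[m ⊔ m₂] fun ω => η ω / g ω := hη.div (hgm.mono le_sup_left le_rfl)
  calc ∫ ω, E.indicator 1 ω / g ω * η ω ∂μ = ∫ ω, E.indicator 1 ω * (η ω / g ω) ∂μ := by
        congr 1 with ω
        ring
    _ = ∫ ω, (μ⟦E | m⟧) ω * (η ω / g ω) ∂μ := CondIndep.integral_indicator_mul h hm₁ hm₂ hE hξ
    _ = ∫ ω, η ω ∂μ := by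
        refine integral_congr_ae ?_
        filter_upwards [hg, hg0] with ω hgω hg0ω
        rw [hgω]
        field_simp

theorem CondIndepFun.integral_ite_div_mul {β : Type*} [MeasurableSpace β] {Z : Ω → ℝ}
    {W : Ω → β} (h : CondIndepFun m hm Z W μ) (hZ : Measurable Z) (hW : Measurable W) {z : ℝ}
    {g η : Ω → ℝ} (hgm : Measurable[m] g)
    (hg : μ[fun ω => if Z ω = z then (1 : ℝ) else 0 | m] =ᵐ[μ] g) (hg0 : ∀ᵐ ω ∂μ, g ω ≠ 0)
    (hη : Measurable[m ⊔ MeasurableSpace.comap W inferInstance] η) :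
    ∫ ω, (if Z ω = z then 1 else 0) / g ω * η ω ∂μ = ∫ ω, η ω ∂μ := by
  have hE : (Z ⁻¹' {z}).indicator (1 : Ω → ℝ) = fun ω => if Z ω = z then 1 else 0 := by
    ext ω
    by_cases hω : Z ω = z <;> simp [hω]
  have hipw := CondIndep.integral_indicator_div_mul
    ((condIndepFun_iff_condIndep m hm Z W μ).mp h) hZ.comap_le hW.comap_le
    ⟨{z}, measurableSet_singleton z, rfl⟩ hgm (by rw [← hE] at hg; exact hg) hg0 hη
  rwa [hE] at hipw

end CondIndep

section Factorization

variable {Ω : Type*} {m mΩ : MeasurableSpace Ω} {μ : Measure Ω}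

theorem integral_eq_integral_mul_of_condExp_eq_mul (hm : m ≤ mΩ) [SigmaFinite (μ.trim hm)]
    {X P g : Ω → ℝ} (hg : Measurable[m] g) (hP : Integrable P μ) (hP0 : 0 ≤ᵐ[μ] P)
    (h : μ[X|m] =ᵐ[μ] fun ω => g ω * μ[P|m] ω) :
    ∫ ω, X ω ∂μ = ∫ ω, g ω * P ω ∂μ :=
  calc ∫ ω, X ω ∂μ = ∫ ω, μ[X|m] ω ∂μ := (integral_condExp hm).symm
    _ = ∫ ω, μ[P|m] ω * g ω ∂μ := integral_congr_ae (h.mono fun ω hω => hω.trans (mul_comm _ _))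
    _ = ∫ ω, P ω * g ω ∂μ := integral_mul_condExp_of_nonneg hm hg hP hP0
    _ = ∫ ω, g ω * P ω ∂μ := by simp_rw [mul_comm]

theorem condExp_mul_add_mul_ae_eq {b₁ b₂ X₁ X₂ g₁ g₂ q : Ω → ℝ}
    (hb₁ : StronglyMeasurable[m] b₁) (hb₂ : StronglyMeasurable[m] b₂)
    (hX₁ : Integrable X₁ μ) (hX₂ : Integrable X₂ μ)
    (hbX₁ : Integrable (fun ω => b₁ ω * X₁ ω) μ) (hbX₂ : Integrable (fun ω => b₂ ω * X₂ ω) μ)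
    (h₁ : μ[X₁|m] =ᵐ[μ] fun ω => g₁ ω * q ω) (h₂ : μ[X₂|m] =ᵐ[μ] fun ω => g₂ ω * q ω) :
    μ[fun ω => b₁ ω * X₁ ω + b₂ ω * X₂ ω | m]
      =ᵐ[μ] fun ω => (b₁ ω * g₁ ω + b₂ ω * g₂ ω) * q ω := by
  have e₁ : μ[fun ω => b₁ ω * X₁ ω | m] =ᵐ[μ] fun ω => b₁ ω * μ[X₁|m] ω :=
    condExp_mul_of_stronglyMeasurable_left hb₁ hbX₁ hX₁
  have e₂ : μ[fun ω => b₂ ω * X₂ ω | m] =ᵐ[μ] fun ω => b₂ ω * μ[X₂|m] ω :=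
    condExp_mul_of_stronglyMeasurable_left hb₂ hbX₂ hX₂
  filter_upwards [condExp_add hbX₁ hbX₂ m, e₁, e₂, h₁, h₂] with ω hadd e₁ω e₂ω h₁ω h₂ω
  rw [show (fun ω => b₁ ω * X₁ ω + b₂ ω * X₂ ω)
      = (fun ω => b₁ ω * X₁ ω) + (fun ω => b₂ ω * X₂ ω) from rfl,
    hadd, Pi.add_apply, e₁ω, e₂ω, h₁ω, h₂ω]
  ring

theorem integral_ite_mul_add_ite_mul_eq (hm : m ≤ mΩ) [SigmaFinite (μ.trim hm)]
    {d X₁ X₂ P g₁ g₂ : Ω → ℝ} (hd : Measurable[m] d) (hg₁ : Measurable[m] g₁)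
    (hg₂ : Measurable[m] g₂) (hX₁ : Integrable X₁ μ) (hX₂ : Integrable X₂ μ)
    (hP : Integrable P μ) (hP0 : 0 ≤ᵐ[μ] P)
    (h₁ : μ[X₁|m] =ᵐ[μ] fun ω => g₁ ω * μ[P|m] ω)
    (h₂ : μ[X₂|m] =ᵐ[μ] fun ω => g₂ ω * μ[P|m] ω) :
    ∫ ω, ((if d ω = 1 then 1 else 0) * X₁ ω + (if d ω = -1 then 1 else 0) * X₂ ω) ∂μ
      = ∫ ω, ((if d ω = 1 then 1 else 0) * g₁ ω + (if d ω = -1 then 1 else 0) * g₂ ω) * P ω ∂μ := by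
  have hb : ∀ r : ℝ, Measurable[m] fun ω => if d ω = r then (1 : ℝ) else 0 := fun r => by fun_prop
  have hbX : ∀ (r : ℝ) (X : Ω → ℝ), Integrable X μ →
      Integrable (fun ω => (if d ω = r then 1 else 0) * X ω) μ := fun r X hX =>
    hX.bdd_mul (c := 1) ((hb r).mono hm le_rfl).aestronglyMeasurable
      (.of_forall fun ω => by split_ifs <;> norm_num)
  exact integral_eq_integral_mul_of_condExp_eq_mul hm (by fun_prop) hP hP0
    (condExp_mul_add_mul_ae_eq (hb 1).stronglyMeasurable (hb (-1)).stronglyMeasurable hX₁ hX₂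
      (hbX 1 X₁ hX₁) (hbX (-1) X₂ hX₂) h₁ h₂)

end Factorization

section ComplierIV

variable {Ω : Type*} {m mΩ : MeasurableSpace Ω} {μ : Measure Ω}
  {Z A A1 Am1 Y Y1 Ym1 d : Ω → ℝ}

/-- `a Y_a 1{a = d}` for a treatment value `a ∈ {±1}`, `Y_a` being the potential outcome
under `a` (see `armTerm_eq_mul`). -/
noncomputable def armTerm (Y1 Ym1 d a : Ω → ℝ) (ω : Ω) : ℝ :=
  if a ω = d ω then (if a ω = 1 then Y1 ω else if a ω = -1 then -Ym1 ω else 0) else 0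

theorem armTerm_eq_mul (a : Ω → ℝ) (ω : Ω) :
    armTerm Y1 Ym1 d a ω =
      a ω * (Y1 ω * (if a ω = 1 then 1 else 0) + Ym1 ω * (if a ω = -1 then 1 else 0)) *
        (if a ω = d ω then 1 else 0) := by
  unfold armTerm
  by_cases h1 : a ω = 1
  · norm_num [h1]
  · by_cases h2 : a ω = -1 <;> norm_num [h1, h2]

theorem abs_armTerm_le (a : Ω → ℝ) (ω : Ω) : |armTerm Y1 Ym1 d a ω| ≤ |Y1 ω| + |Ym1 ω| := by
  unfold armTerm
  split_ifs <;> norm_num <;> positivity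

theorem measurable_armTerm {a : Ω → ℝ} (hY1 : Measurable[m] Y1) (hYm1 : Measurable[m] Ym1)
    (hd : Measurable[m] d) (ha : Measurable[m] a) : Measurable[m] (armTerm Y1 Ym1 d a) := by
  unfold armTerm
  fun_prop

theorem integrable_armTerm {a : Ω → ℝ} (hY1 : Integrable Y1 μ) (hYm1 : Integrable Ym1 μ)
    (hY1m : Measurable Y1) (hYm1m : Measurable Ym1) (hd : Measurable d) (ha : Measurable a) :
    Integrable (armTerm Y1 Ym1 d a) μ :=
  (hY1.abs.add hYm1.abs).mono' (measurable_armTerm hY1m hYm1m hd ha).aestronglyMeasurable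
    (.of_forall (abs_armTerm_le a))

theorem ivIntegrand_ae_eq_armTerm_sub (hZ : ∀ ω, Z ω = 1 ∨ Z ω = -1)
    (hA : ∀ᵐ ω ∂μ,
      A ω = A1 ω * (if Z ω = 1 then 1 else 0) + Am1 ω * (if Z ω = -1 then 1 else 0))
    (hY : ∀ᵐ ω ∂μ,
      Y ω = Y1 ω * (if A ω = 1 then 1 else 0) + Ym1 ω * (if A ω = -1 then 1 else 0))
    (F : ℝ → Ω → ℝ) :
    (fun ω => Z ω * A ω * Y ω * (if A ω = d ω then 1 else 0) / F (Z ω) ω) =ᵐ[μ]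
      fun ω => (if Z ω = 1 then 1 else 0) / F 1 ω * armTerm Y1 Ym1 d A1 ω
        - (if Z ω = -1 then 1 else 0) / F (-1) ω * armTerm Y1 Ym1 d Am1 ω := by
  filter_upwards [hA, hY] with ω hAω hYω
  rcases hZ ω with hz | hz
  · have hA1 : A1 ω = A ω := by rw [hAω, hz]; norm_num
    simp only [armTerm_eq_mul, hz, hA1, hYω, if_true, if_neg (show (1 : ℝ) ≠ -1 by norm_num)]
    ring
  · have hAm1 : Am1 ω = A ω := by rw [hAω, hz]; norm_num
    simp only [armTerm_eq_mul, hz, hAm1, hYω, if_true, if_neg (show (-1 : ℝ) ≠ 1 by norm_num)]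
    ring

theorem armTerm_sub_armTerm_ae_eq (hA1 : ∀ ω, A1 ω = 1 ∨ A1 ω = -1)
    (hAm1 : ∀ ω, Am1 ω = 1 ∨ Am1 ω = -1) (hd : ∀ ω, d ω = 1 ∨ d ω = -1)
    (hmono : ∀ᵐ ω ∂μ, Am1 ω ≤ A1 ω) :
    (fun ω => armTerm Y1 Ym1 d A1 ω - armTerm Y1 Ym1 d Am1 ω) =ᵐ[μ]
      fun ω => (if d ω = 1 then 1 else 0) *
          (Y1 ω * ((if A1 ω = 1 then 1 else 0) * (if Am1 ω = -1 then 1 else 0)))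
        + (if d ω = -1 then 1 else 0) *
          (Ym1 ω * ((if A1 ω = 1 then 1 else 0) * (if Am1 ω = -1 then 1 else 0))) := by
  filter_upwards [hmono] with ω hω
  rcases hA1 ω with h1 | h1 <;> rcases hAm1 ω with h2 | h2 <;> rcases hd ω with h3 | h3 <;>
    norm_num [armTerm, h1, h2, h3] <;> norm_num [h1, h2] at hω

variable [IsFiniteMeasure μ]

theorem integrable_ite_eq_one_zero (hZ : Measurable Z) (z : ℝ) :
    Integrable (fun ω => if Z ω = z then (1 : ℝ) else 0) μ :=
  .of_bound (by fun_prop : Measurable fun ω => if Z ω = z then (1 : ℝ) else 0).aestronglyMeasurable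
    1 (.of_forall fun ω => by split_ifs <;> norm_num)

theorem condExp_ite_neg_one_ae_eq (hm : m ≤ mΩ) (hZ : Measurable Z)
    (hZval : ∀ ω, Z ω = 1 ∨ Z ω = -1) :
    μ[fun ω => if Z ω = -1 then (1 : ℝ) else 0 | m]
      =ᵐ[μ] fun ω => 1 - μ[fun ω => if Z ω = 1 then (1 : ℝ) else 0 | m] ω := by
  have hsplit : (fun ω => if Z ω = -1 then (1 : ℝ) else 0)
      = (fun _ => (1 : ℝ)) - fun ω => if Z ω = 1 then 1 else 0 := by
    funext ω
    rcases hZval ω with h | h <;> norm_num [h]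
  rw [hsplit]
  filter_upwards [condExp_sub (integrable_const 1) (integrable_ite_eq_one_zero hZ 1) m] with ω h
  rw [h, Pi.sub_apply, condExp_const hm]

theorem integral_ivIntegrand_eq_integral_armTerm_sub [StandardBorelSpace Ω] {hm : m ≤ mΩ}
    (hZ : Measurable Z) (hA1 : Measurable A1) (hAm1 : Measurable Am1) (hY1 : Measurable Y1)
    (hYm1 : Measurable Ym1) (hY1int : Integrable Y1 μ) (hYm1int : Integrable Ym1 μ)
    (hZval : ∀ ω, Z ω = 1 ∨ Z ω = -1)
    (hconsA : ∀ᵐ ω ∂μ,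
      A ω = A1 ω * (if Z ω = 1 then 1 else 0) + Am1 ω * (if Z ω = -1 then 1 else 0))
    (hconsY : ∀ᵐ ω ∂μ,
      Y ω = Y1 ω * (if A ω = 1 then 1 else 0) + Ym1 ω * (if A ω = -1 then 1 else 0))
    (hcausal : CondIndepFun m hm Z (fun ω => (A1 ω, Am1 ω, Y1 ω, Ym1 ω)) μ)
    (F : ℝ → Ω → ℝ) (hFm : ∀ z, Measurable[m] (F z))
    (hF : ∀ z ∈ ({1, -1} : Set ℝ), μ[fun ω => if Z ω = z then (1 : ℝ) else 0 | m] =ᵐ[μ] F z)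
    {c : ℝ} (hc : 0 < c) (hpos : ∀ᵐ ω ∂μ, c ≤ F 1 ω ∧ F 1 ω ≤ 1 - c)
    (hd : Measurable[m] d) :
    ∫ ω, Z ω * A ω * Y ω * (if A ω = d ω then 1 else 0) / F (Z ω) ω ∂μ
      = ∫ ω, (armTerm Y1 Ym1 d A1 ω - armTerm Y1 Ym1 d Am1 ω) ∂μ := by
  set W := fun ω => (A1 ω, Am1 ω, Y1 ω, Ym1 ω)
  have hW : Measurable W := hA1.prodMk (hAm1.prodMk (hY1.prodMk hYm1))
  have hWsup : Measurable[m ⊔ MeasurableSpace.comap W inferInstance] W :=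
    (comap_measurable W).mono le_sup_right le_rfl
  have hF1 : ∀ᵐ ω ∂μ, c ≤ F 1 ω := hpos.mono fun _ hω => hω.1
  have hFm1 : ∀ᵐ ω ∂μ, c ≤ F (-1) ω := by
    filter_upwards [condExp_ite_neg_one_ae_eq hm hZ hZval, hF 1 (by simp), hF (-1) (by simp),
      hpos] with ω h h1 hm1 hp
    rw [← hm1, h, h1]
    linarith [hp.2]
  have hipw : ∀ z ∈ ({1, -1} : Set ℝ), (∀ᵐ ω ∂μ, c ≤ F z ω) →
      ∀ a, Measurable[m ⊔ MeasurableSpace.comap W inferInstance] a →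
      ∫ ω, (if Z ω = z then 1 else 0) / F z ω * armTerm Y1 Ym1 d a ω ∂μ
        = ∫ ω, armTerm Y1 Ym1 d a ω ∂μ := fun z hz hcF a ha =>
    CondIndepFun.integral_ite_div_mul hcausal hZ hW (hFm z) (hF z hz)
      (hcF.mono fun ω hω => (hc.trans_le hω).ne')
      (measurable_armTerm hWsup.snd.snd.fst hWsup.snd.snd.snd (hd.mono le_sup_left le_rfl) ha)
  have hint : ∀ z, (∀ᵐ ω ∂μ, c ≤ F z ω) → ∀ a, Measurable a →
      Integrable (fun ω => (if Z ω = z then 1 else 0) / F z ω * armTerm Y1 Ym1 d a ω) μ := by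
    intro z hcF a ha
    have hFz : Measurable (F z) := (hFm z).mono hm le_rfl
    refine (integrable_armTerm hY1int hYm1int hY1 hYm1 (hd.mono hm le_rfl) ha).bdd_mul
      (c := c⁻¹)
      (by fun_prop : Measurable fun ω => (if Z ω = z then 1 else 0) / F z ω).aestronglyMeasurable
      (hcF.mono fun ω hω => ?_)
    have hF0 : 0 < F z ω := hc.trans_le hω
    split_ifs <;> simp [abs_of_pos hF0, inv_anti₀ hc hω, hc.le]
  calc ∫ ω, Z ω * A ω * Y ω * (if A ω = d ω then 1 else 0) / F (Z ω) ω ∂μ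
      = ∫ ω, ((if Z ω = 1 then 1 else 0) / F 1 ω * armTerm Y1 Ym1 d A1 ω
          - (if Z ω = -1 then 1 else 0) / F (-1) ω * armTerm Y1 Ym1 d Am1 ω) ∂μ :=
        integral_congr_ae (ivIntegrand_ae_eq_armTerm_sub hZval hconsA hconsY F)
    _ = ∫ ω, armTerm Y1 Ym1 d A1 ω ∂μ - ∫ ω, armTerm Y1 Ym1 d Am1 ω ∂μ := by
        rw [integral_sub (hint 1 hF1 A1 hA1) (hint (-1) hFm1 Am1 hAm1),
          hipw 1 (by simp) hF1 A1 hWsup.fst, hipw (-1) (by simp) hFm1 Am1 hWsup.snd.fst]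
    _ = ∫ ω, (armTerm Y1 Ym1 d A1 ω - armTerm Y1 Ym1 d Am1 ω) ∂μ :=
        (integral_sub (integrable_armTerm hY1int hYm1int hY1 hYm1 (hd.mono hm le_rfl) hA1)
          (integrable_armTerm hY1int hYm1int hY1 hYm1 (hd.mono hm le_rfl) hAm1)).symm

end ComplierIV

theorem complier_value_identification_general
    {Ω 𝓛 : Type*} [MeasurableSpace Ω] [StandardBorelSpace Ω]
    [MeasurableSpace 𝓛]
    (μ : Measure Ω) [IsProbabilityMeasure μ]
    (L : Ω → 𝓛) (Z A A1 Am1 Y Y1 Ym1 : Ω → ℝ)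
    (hL : Measurable L) (hZ : Measurable Z)
    (hA1 : Measurable A1) (hAm1 : Measurable Am1)
    (hY1m : Measurable Y1) (hYm1m : Measurable Ym1)
    (hZval : ∀ ω, Z ω = 1 ∨ Z ω = -1)
    (hA1val : ∀ ω, A1 ω = 1 ∨ A1 ω = -1) (hAm1val : ∀ ω, Am1 ω = 1 ∨ Am1 ω = -1)
    (hY1int : Integrable Y1 μ) (hYm1int : Integrable Ym1 μ)
    -- consistency for treatment: A = A₁·1{Z=1} + A₋₁·1{Z=−1} a.s.
    (hconsA : ∀ᵐ ω ∂μ, A ω = A1 ω * (if Z ω = 1 then 1 else 0)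
        + Am1 ω * (if Z ω = -1 then 1 else 0))
    -- consistency for outcome (encodes the exclusion restriction)
    (hconsY : ∀ᵐ ω ∂μ, Y ω = Y1 ω * (if A ω = 1 then 1 else 0)
        + Ym1 ω * (if A ω = -1 then 1 else 0))
    -- causal IV: Z ⫫ (A₁, A₋₁, Y₁, Y₋₁) | L
    (hcausal : CondIndepFun (mOf L) hL.comap_le Z
        (fun ω => (A1 ω, Am1 ω, Y1 ω, Ym1 ω)) μ)
    -- f(z|L) and IV positivity
    (fZ : ℝ → 𝓛 → ℝ) (hfZmeas : ∀ z, Measurable (fZ z))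
    (hfZ : ∀ z ∈ ({1, -1} : Set ℝ),
      (μ[(fun ω => if Z ω = z then (1 : ℝ) else 0) | mOf L])
        =ᵐ[μ] fun ω => fZ z (L ω))
    (c : ℝ) (hc : 0 < c)
    (hpos : ∀ᵐ ω ∂μ, c ≤ fZ 1 (L ω) ∧ fZ 1 (L ω) ≤ 1 - c)
    -- monotonicity: no defiers
    (hmono : ∀ᵐ ω ∂μ, Am1 ω ≤ A1 ω)
    -- P(C) > 0, where C = {A₁ = 1, A₋₁ = −1} = {A₁ > A₋₁}
    (hPC : 0 < ∫ ω, (if A1 ω = 1 then (1 : ℝ) else 0) * (if Am1 ω = -1 then 1 else 0) ∂μ)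
    -- E[Y₁|C,L] and E[Y₋₁|C,L], defined by the usual factorization against P(C|L)
    (gY1C gYm1C : 𝓛 → ℝ) (hgY1Cm : Measurable gY1C) (hgYm1Cm : Measurable gYm1C)
    (hgY1C : (μ[(fun ω => Y1 ω * ((if A1 ω = 1 then (1 : ℝ) else 0) *
          (if Am1 ω = -1 then 1 else 0))) | mOf L])
        =ᵐ[μ] fun ω => gY1C (L ω) *
          (μ[(fun ω' => (if A1 ω' = 1 then (1 : ℝ) else 0) *
            (if Am1 ω' = -1 then 1 else 0)) | mOf L]) ω)
    (hgYm1C : (μ[(fun ω => Ym1 ω * ((if A1 ω = 1 then (1 : ℝ) else 0) *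
          (if Am1 ω = -1 then 1 else 0))) | mOf L])
        =ᵐ[μ] fun ω => gYm1C (L ω) *
          (μ[(fun ω' => (if A1 ω' = 1 then (1 : ℝ) else 0) *
            (if Am1 ω' = -1 then 1 else 0)) | mOf L]) ω)
    -- a treatment regime
    (D : 𝓛 → ℝ) (hD : Measurable D) (hDval : ∀ l, D l = 1 ∨ D l = -1) :
    -- E[Z·A·Y·1{A=D(L)}/f(Z|L)] = P(C) · 𝒱_c(D)
    ((∫ ω, Z ω * A ω * Y ω * (if A ω = D (L ω) then 1 else 0) / fZ (Z ω) (L ω) ∂μ)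
      = (∫ ω, (if A1 ω = 1 then (1 : ℝ) else 0) * (if Am1 ω = -1 then 1 else 0) ∂μ) *
        ((∫ ω, ((if D (L ω) = 1 then (1 : ℝ) else 0) * gY1C (L ω)
            + (if D (L ω) = -1 then 1 else 0) * gYm1C (L ω)) *
            ((if A1 ω = 1 then (1 : ℝ) else 0) * (if Am1 ω = -1 then 1 else 0)) ∂μ) /
          ∫ ω, (if A1 ω = 1 then (1 : ℝ) else 0) * (if Am1 ω = -1 then 1 else 0) ∂μ))
    ∧ -- equivalently, 𝒱_c(D) = E[Z·A·Y·1{A=D(L)}/(P(C)·f(Z|L))]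
    ((∫ ω, ((if D (L ω) = 1 then (1 : ℝ) else 0) * gY1C (L ω)
          + (if D (L ω) = -1 then 1 else 0) * gYm1C (L ω)) *
          ((if A1 ω = 1 then (1 : ℝ) else 0) * (if Am1 ω = -1 then 1 else 0)) ∂μ) /
        (∫ ω, (if A1 ω = 1 then (1 : ℝ) else 0) * (if Am1 ω = -1 then 1 else 0) ∂μ)
      = ∫ ω, Z ω * A ω * Y ω * (if A ω = D (L ω) then 1 else 0) /
          ((∫ ω', (if A1 ω' = 1 then (1 : ℝ) else 0) * (if Am1 ω' = -1 then 1 else 0) ∂μ) *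
            fZ (Z ω) (L ω)) ∂μ) := by
  have hLm : Measurable[mOf L] L := comap_measurable L
  have hC : ∀ ω, ‖(if A1 ω = 1 then (1 : ℝ) else 0) * (if Am1 ω = -1 then 1 else 0)‖ ≤ 1 :=
    fun ω => by split_ifs <;> norm_num
  have hCm : Measurable fun ω =>
      (if A1 ω = 1 then (1 : ℝ) else 0) * (if Am1 ω = -1 then 1 else 0) := by
    fun_prop
  have key : ∫ ω, Z ω * A ω * Y ω * (if A ω = D (L ω) then 1 else 0) / fZ (Z ω) (L ω) ∂μ
      = ∫ ω, ((if D (L ω) = 1 then 1 else 0) * gY1C (L ω)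
          + (if D (L ω) = -1 then 1 else 0) * gYm1C (L ω)) *
          ((if A1 ω = 1 then 1 else 0) * (if Am1 ω = -1 then 1 else 0)) ∂μ :=
    calc _ = ∫ ω, (armTerm Y1 Ym1 (fun ω => D (L ω)) A1 ω
              - armTerm Y1 Ym1 (fun ω => D (L ω)) Am1 ω) ∂μ :=
          integral_ivIntegrand_eq_integral_armTerm_sub hZ hA1 hAm1 hY1m hYm1m hY1int hYm1int
            hZval hconsA hconsY hcausal (fun z ω => fZ z (L ω)) (fun z => (hfZmeas z).comp hLm)
            hfZ hc hpos (hD.comp hLm)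
      _ = _ := integral_congr_ae
            (armTerm_sub_armTerm_ae_eq hA1val hAm1val (fun ω => hDval (L ω)) hmono)
      _ = _ := integral_ite_mul_add_ite_mul_eq hL.comap_le (hD.comp hLm) (hgY1Cm.comp hLm)
          (hgYm1Cm.comp hLm) (hY1int.mul_bdd hCm.aestronglyMeasurable (.of_forall hC))
          (hYm1int.mul_bdd hCm.aestronglyMeasurable (.of_forall hC))
          (.of_bound hCm.aestronglyMeasurable 1 (.of_forall hC))
          (.of_forall fun ω => by positivity) hgY1C hgYm1C
  refine ⟨key.trans (mul_div_cancel₀ _ hPC.ne').symm, ?_⟩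
  simp_rw [div_mul_eq_div_div_swap]
  rw [integral_div, key]

/-- **Theorem 4.** Under the complier IV setting (consistency, exclusion restriction,
causal IV, IV positivity, monotonicity, `P(C) > 0`), the compliers' value function is
nonparametrically identified: for every regime `D`,
`E[Z·A·Y·1{A=D(L)}/f(Z|L)] = P(A₁>A₋₁) · 𝒱_c(D)`, equivalently
`𝒱_c(D) = E[Z·A·Y·1{A=D(L)}/(P(A₁>A₋₁)·f(Z|L))]`. -/
theorem complier_value_identification
    {Ω 𝓛 : Type*} [MeasurableSpace Ω] [StandardBorelSpace Ω]
    [MeasurableSpace 𝓛] [StandardBorelSpace 𝓛]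
    (μ : Measure Ω) [IsProbabilityMeasure μ]
    (L : Ω → 𝓛) (Z A A1 Am1 Y Y1 Ym1 : Ω → ℝ)
    (hL : Measurable L) (hZ : Measurable Z) (hA : Measurable A)
    (hA1 : Measurable A1) (hAm1 : Measurable Am1)
    (hYm : Measurable Y) (hY1m : Measurable Y1) (hYm1m : Measurable Ym1)
    (hZval : ∀ ω, Z ω = 1 ∨ Z ω = -1) (hAval : ∀ ω, A ω = 1 ∨ A ω = -1)
    (hA1val : ∀ ω, A1 ω = 1 ∨ A1 ω = -1) (hAm1val : ∀ ω, Am1 ω = 1 ∨ Am1 ω = -1)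
    (hY1int : Integrable Y1 μ) (hYm1int : Integrable Ym1 μ) (hYint : Integrable Y μ)
    -- consistency for treatment: A = A₁·1{Z=1} + A₋₁·1{Z=−1} a.s.
    (hconsA : ∀ᵐ ω ∂μ, A ω = A1 ω * (if Z ω = 1 then 1 else 0)
        + Am1 ω * (if Z ω = -1 then 1 else 0))
    -- consistency for outcome (encodes the exclusion restriction)
    (hconsY : ∀ᵐ ω ∂μ, Y ω = Y1 ω * (if A ω = 1 then 1 else 0)
        + Ym1 ω * (if A ω = -1 then 1 else 0))
    -- causal IV: Z ⫫ (A₁, A₋₁, Y₁, Y₋₁) | L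
    (hcausal : CondIndepFun (mOf L) hL.comap_le Z
        (fun ω => (A1 ω, Am1 ω, Y1 ω, Ym1 ω)) μ)
    -- f(z|L) and IV positivity
    (fZ : ℝ → 𝓛 → ℝ) (hfZmeas : ∀ z, Measurable (fZ z))
    (hfZ : ∀ z ∈ ({1, -1} : Set ℝ),
      (μ[(fun ω => if Z ω = z then (1 : ℝ) else 0) | mOf L])
        =ᵐ[μ] fun ω => fZ z (L ω))
    (c : ℝ) (hc : 0 < c)
    (hpos : ∀ᵐ ω ∂μ, c ≤ fZ 1 (L ω) ∧ fZ 1 (L ω) ≤ 1 - c)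
    -- monotonicity: no defiers
    (hmono : ∀ᵐ ω ∂μ, Am1 ω ≤ A1 ω)
    -- P(C) > 0, where C = {A₁ = 1, A₋₁ = −1} = {A₁ > A₋₁}
    (hPC : 0 < ∫ ω, (if A1 ω = 1 then (1 : ℝ) else 0) * (if Am1 ω = -1 then 1 else 0) ∂μ)
    -- E[Y₁|C,L] and E[Y₋₁|C,L], defined by the usual factorization against P(C|L)
    (gY1C gYm1C : 𝓛 → ℝ) (hgY1Cm : Measurable gY1C) (hgYm1Cm : Measurable gYm1C)
    (hgY1C : (μ[(fun ω => Y1 ω * ((if A1 ω = 1 then (1 : ℝ) else 0) *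
          (if Am1 ω = -1 then 1 else 0))) | mOf L])
        =ᵐ[μ] fun ω => gY1C (L ω) *
          (μ[(fun ω' => (if A1 ω' = 1 then (1 : ℝ) else 0) *
            (if Am1 ω' = -1 then 1 else 0)) | mOf L]) ω)
    (hgYm1C : (μ[(fun ω => Ym1 ω * ((if A1 ω = 1 then (1 : ℝ) else 0) *
          (if Am1 ω = -1 then 1 else 0))) | mOf L])
        =ᵐ[μ] fun ω => gYm1C (L ω) *
          (μ[(fun ω' => (if A1 ω' = 1 then (1 : ℝ) else 0) *
            (if Am1 ω' = -1 then 1 else 0)) | mOf L]) ω)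
    -- a treatment regime
    (D : 𝓛 → ℝ) (hD : Measurable D) (hDval : ∀ l, D l = 1 ∨ D l = -1) :
    -- E[Z·A·Y·1{A=D(L)}/f(Z|L)] = P(C) · 𝒱_c(D)
    ((∫ ω, Z ω * A ω * Y ω * (if A ω = D (L ω) then 1 else 0) / fZ (Z ω) (L ω) ∂μ)
      = (∫ ω, (if A1 ω = 1 then (1 : ℝ) else 0) * (if Am1 ω = -1 then 1 else 0) ∂μ) *
        ((∫ ω, ((if D (L ω) = 1 then (1 : ℝ) else 0) * gY1C (L ω)
            + (if D (L ω) = -1 then 1 else 0) * gYm1C (L ω)) *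
            ((if A1 ω = 1 then (1 : ℝ) else 0) * (if Am1 ω = -1 then 1 else 0)) ∂μ) /
          ∫ ω, (if A1 ω = 1 then (1 : ℝ) else 0) * (if Am1 ω = -1 then 1 else 0) ∂μ))
    ∧ -- equivalently, 𝒱_c(D) = E[Z·A·Y·1{A=D(L)}/(P(C)·f(Z|L))]
    ((∫ ω, ((if D (L ω) = 1 then (1 : ℝ) else 0) * gY1C (L ω)
          + (if D (L ω) = -1 then 1 else 0) * gYm1C (L ω)) *
          ((if A1 ω = 1 then (1 : ℝ) else 0) * (if Am1 ω = -1 then 1 else 0)) ∂μ) /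
        (∫ ω, (if A1 ω = 1 then (1 : ℝ) else 0) * (if Am1 ω = -1 then 1 else 0) ∂μ)
      = ∫ ω, Z ω * A ω * Y ω * (if A ω = D (L ω) then 1 else 0) /
          ((∫ ω', (if A1 ω' = 1 then (1 : ℝ) else 0) * (if Am1 ω' = -1 then 1 else 0) ∂μ) *
            fZ (Z ω) (L ω)) ∂μ) :=
  complier_value_identification_general μ L Z A A1 Am1 Y Y1 Ym1 hL hZ hA1 hAm1 hY1m hYm1m hZval
    hA1val hAm1val hY1int hYm1int hconsA hconsY hcausal fZ hfZmeas hfZ c hc hpos hmono hPC gY1C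
    gYm1C hgY1Cm hgYm1Cm hgY1C hgYm1C D hD hDval
end

section
/- Suppose measurable functions ℓ, u, ℓ₁, u₁, ℓ₋₁, u₋₁ on 𝓛 satisfy, almost surely, ℓ(L) ≤ E(Y₁−Y₋₁|L) ≤ u(L), ℓ₁(L) ≤ E(Y₁|L) ≤ u₁(L), and ℓ₋₁(L) ≤ E(Y₋₁|L) ≤ u₋₁(L), together with the identities ℓ = ℓ₁ − u₋₁ and u = u₁ − ℓ₋₁ pointwise, and let ω₁, ω₋₁ be measurable functions on 𝓛 with ω₁ ≥ 0, ω₋₁ ≥ 0, ω₁ + ω₋₁ = 1. Then for every treatment regime 𝒟, E[ ω₁(L)·( ℓ(L)·1{𝒟(L)=1} + ℓ₋₁(L) ) + ω₋₁(L)·( −u(L)·1{𝒟(L)=−1} + ℓ₁(L) ) ] ≤ E[ ℓ₁(L)·1{𝒟(L)=1} + ℓ₋₁(L)·1{𝒟(L)=−1} ] ≤ E[ Y_{𝒟(L)} ]. (Lemma S1, lower bounds on the value function.) -/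
/-!
Pointwise, both bracketed terms on the left are at most `ℓ₁ 1{𝒟 = 1} + ℓ₋₁ 1{𝒟 = −1}` (this is
where `ℓ₋₁ ≤ u₋₁` and `ℓ₁ ≤ u₁` enter), so their `ω`-weighted average is too. For the second
inequality, `{𝒟(L) = ±1}` is `σ(L)`-measurable, so on it `∫ ℓ₁(L) ≤ ∫ E(Y₁|L) = ∫ Y₁`, and
likewise for `ℓ₋₁` and `Y₋₁`.
-/

open MeasureTheory ProbabilityTheory

section Indicator

variable {α : Type*} {p : α → Prop} [DecidablePred p]

lemma mul_ite_one_zero_eq_indicator (f : α → ℝ) :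
    (fun a => f a * if p a then 1 else 0) = {a | p a}.indicator f := by
  ext a
  by_cases h : p a <;> simp [h]

lemma MeasureTheory.Integrable.mul_ite_one_zero [MeasurableSpace α] {μ : Measure α} {f : α → ℝ}
    (hf : Integrable f μ) (hp : MeasurableSet {a | p a}) : Integrable (fun a => f a * if p a then 1 else 0) μ := by
  rw [mul_ite_one_zero_eq_indicator]
  exact hf.indicator hp

end Indicator

lemma setIntegral_le_of_ae_le_condExp {α : Type*} {m m₀ : MeasurableSpace α} {μ : Measure α}
    [IsFiniteMeasure μ] (hm : m ≤ m₀) {f g : α → ℝ} (hf : Integrable f μ) (hg : Integrable g μ)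
    (hgf : g ≤ᵐ[μ] μ[f | m]) {s : Set α} (hs : MeasurableSet[m] s) :
    ∫ a in s, g a ∂μ ≤ ∫ a in s, f a ∂μ := by
  rw [← setIntegral_condExp hm hf hs]
  exact setIntegral_mono_ae hg.integrableOn integrable_condExp.integrableOn hgf

lemma weighted_regime_terms_le {w₁ w₂ d l1 u1 lm1 um1 : ℝ} (hw₁ : 0 ≤ w₁) (hw₂ : 0 ≤ w₂)
    (hw : w₁ + w₂ = 1) (hd : d = 1 ∨ d = -1) (h1 : l1 ≤ u1) (hm1 : lm1 ≤ um1) :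
    w₁ * ((l1 - um1) * (if d = 1 then 1 else 0) + lm1)
        + w₂ * (-(u1 - lm1) * (if d = -1 then 1 else 0) + l1)
      ≤ l1 * (if d = 1 then 1 else 0) + lm1 * (if d = -1 then 1 else 0) := by
  set v := l1 * (if d = 1 then 1 else 0) + lm1 * (if d = -1 then 1 else 0)
  have hA : (l1 - um1) * (if d = 1 then 1 else 0) + lm1 ≤ v := by
    rcases hd with rfl | rfl <;> norm_num [v]; linarith
  have hB : -(u1 - lm1) * (if d = -1 then 1 else 0) + l1 ≤ v := by
    rcases hd with rfl | rfl <;> norm_num [v]; linarith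
  exact convex_Iic v hA hB hw₁ hw₂ hw

lemma norm_le_one_of_add_eq_one {a b : ℝ} (ha : 0 ≤ a) (hb : 0 ≤ b) (hab : a + b = 1) :
    ‖a‖ ≤ 1 := by
  rw [Real.norm_of_nonneg ha]
  linarith

theorem value_function_lower_bounds_general
    {Ω 𝓛 : Type*} [MeasurableSpace Ω] [MeasurableSpace 𝓛]
    (μ : Measure Ω) [IsProbabilityMeasure μ]
    (L : Ω → 𝓛) (hL : Measurable L)
    (Y1 Ym1 : Ω → ℝ) (hY1int : Integrable Y1 μ) (hYm1int : Integrable Ym1 μ)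
    (l u l1 u1 lm1 um1 ω1 ωm1 : 𝓛 → ℝ)
    (hω1m : Measurable ω1) (hωm1m : Measurable ωm1)
    (hlint : Integrable (fun ω => l (L ω)) μ) (huint : Integrable (fun ω => u (L ω)) μ)
    (hl1int : Integrable (fun ω => l1 (L ω)) μ)
    (hlm1int : Integrable (fun ω => lm1 (L ω)) μ)
    -- a.s. bounds on the conditional means
    (hbd1 : ∀ᵐ ω ∂μ, l1 (L ω) ≤ (μ[Y1 | mOf L]) ω ∧ (μ[Y1 | mOf L]) ω ≤ u1 (L ω))
    (hbdm1 : ∀ᵐ ω ∂μ, lm1 (L ω) ≤ (μ[Ym1 | mOf L]) ω ∧ (μ[Ym1 | mOf L]) ω ≤ um1 (L ω))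
    -- pointwise identities relating the bounds
    (hlid : ∀ x, l x = l1 x - um1 x) (huid : ∀ x, u x = u1 x - lm1 x)
    -- weights
    (hω1 : ∀ x, 0 ≤ ω1 x) (hωm1 : ∀ x, 0 ≤ ωm1 x) (hωsum : ∀ x, ω1 x + ωm1 x = 1)
    -- a treatment regime
    (D : 𝓛 → ℝ) (hD : Measurable D) (hDval : ∀ x, D x = 1 ∨ D x = -1) :
    (∫ ω, ω1 (L ω) * (l (L ω) * (if D (L ω) = 1 then 1 else 0) + lm1 (L ω))
        + ωm1 (L ω) * (-(u (L ω)) * (if D (L ω) = -1 then 1 else 0) + l1 (L ω)) ∂μ)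
      ≤ (∫ ω, l1 (L ω) * (if D (L ω) = 1 then 1 else 0)
          + lm1 (L ω) * (if D (L ω) = -1 then 1 else 0) ∂μ)
    ∧ (∫ ω, l1 (L ω) * (if D (L ω) = 1 then 1 else 0)
          + lm1 (L ω) * (if D (L ω) = -1 then 1 else 0) ∂μ)
      ≤ ∫ ω, Y1 ω * (if D (L ω) = 1 then 1 else 0)
          + Ym1 ω * (if D (L ω) = -1 then 1 else 0) ∂μ := by
  have hm : mOf L ≤ ‹MeasurableSpace Ω› := hL.comap_le
  have hS : ∀ c, MeasurableSet[mOf L] {ω | D (L ω) = c} :=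
    fun c => ⟨_, hD (measurableSet_singleton c), rfl⟩
  have hS₀ : ∀ c, MeasurableSet {ω | D (L ω) = c} := fun c => hm _ (hS c)
  have hl1D := hl1int.mul_ite_one_zero (hS₀ 1)
  have hlm1D := hlm1int.mul_ite_one_zero (hS₀ (-1))
  constructor
  · have hw1 : ∀ ω, ‖ω1 (L ω)‖ ≤ 1 := fun ω =>
      norm_le_one_of_add_eq_one (hω1 _) (hωm1 _) (hωsum _)
    have hwm1 : ∀ ω, ‖ωm1 (L ω)‖ ≤ 1 := fun ω =>
      norm_le_one_of_add_eq_one (hωm1 _) (hω1 _) ((add_comm _ _).trans (hωsum _))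
    have hA := (hlint.mul_ite_one_zero (hS₀ 1)).add hlm1int
    have hB := (huint.neg.mul_ite_one_zero (hS₀ (-1))).add hl1int
    refine integral_mono_ae
      ((hA.bdd_mul (hω1m.comp hL).aestronglyMeasurable (.of_forall hw1)).add
        (hB.bdd_mul (hωm1m.comp hL).aestronglyMeasurable (.of_forall hwm1)))
      (hl1D.add hlm1D) ?_
    filter_upwards [hbd1, hbdm1] with ω h1 hm1
    rw [hlid, huid]
    exact weighted_regime_terms_le (hω1 _) (hωm1 _) (hωsum _) (hDval _) (h1.1.trans h1.2)
      (hm1.1.trans hm1.2)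
  · rw [integral_add hl1D hlm1D, integral_add (hY1int.mul_ite_one_zero (hS₀ 1))
      (hYm1int.mul_ite_one_zero (hS₀ (-1)))]
    simp only [mul_ite_one_zero_eq_indicator, integral_indicator (hS₀ _)]
    exact add_le_add
      (setIntegral_le_of_ae_le_condExp hm hY1int hl1int (hbd1.mono fun _ h => h.1) (hS 1))
      (setIntegral_le_of_ae_le_condExp hm hYm1int hlm1int (hbdm1.mono fun _ h => h.1) (hS (-1)))

/-- **Lemma S1 (lower bounds on the value function).** If `ℓ ≤ E(Y₁−Y₋₁|L) ≤ u`,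
`ℓ₁ ≤ E(Y₁|L) ≤ u₁`, `ℓ₋₁ ≤ E(Y₋₁|L) ≤ u₋₁` a.s., with `ℓ = ℓ₁ − u₋₁` and
`u = u₁ − ℓ₋₁`, and `ω₁, ω₋₁ ≥ 0` with `ω₁ + ω₋₁ = 1`, then for every regime `D`,
`E[ω₁(L)(ℓ(L)1{D(L)=1} + ℓ₋₁(L)) + ω₋₁(L)(−u(L)1{D(L)=−1} + ℓ₁(L))]
  ≤ E[ℓ₁(L)1{D(L)=1} + ℓ₋₁(L)1{D(L)=−1}] ≤ E[Y_{D(L)}]`. -/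
theorem value_function_lower_bounds
    {Ω 𝓛 : Type*} [MeasurableSpace Ω] [MeasurableSpace 𝓛]
    (μ : Measure Ω) [IsProbabilityMeasure μ]
    (L : Ω → 𝓛) (hL : Measurable L)
    (Y1 Ym1 : Ω → ℝ) (hY1int : Integrable Y1 μ) (hYm1int : Integrable Ym1 μ)
    (l u l1 u1 lm1 um1 ω1 ωm1 : 𝓛 → ℝ)
    (hlm : Measurable l) (hum : Measurable u) (hl1m : Measurable l1) (hu1m : Measurable u1)
    (hlm1m : Measurable lm1) (hum1m : Measurable um1)
    (hω1m : Measurable ω1) (hωm1m : Measurable ωm1)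
    (hlint : Integrable (fun ω => l (L ω)) μ) (huint : Integrable (fun ω => u (L ω)) μ)
    (hl1int : Integrable (fun ω => l1 (L ω)) μ) (hu1int : Integrable (fun ω => u1 (L ω)) μ)
    (hlm1int : Integrable (fun ω => lm1 (L ω)) μ) (hum1int : Integrable (fun ω => um1 (L ω)) μ)
    -- a.s. bounds on the conditional means
    (hbd : ∀ᵐ ω ∂μ, l (L ω) ≤ (μ[(fun ω' => Y1 ω' - Ym1 ω') | mOf L]) ω
        ∧ (μ[(fun ω' => Y1 ω' - Ym1 ω') | mOf L]) ω ≤ u (L ω))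
    (hbd1 : ∀ᵐ ω ∂μ, l1 (L ω) ≤ (μ[Y1 | mOf L]) ω ∧ (μ[Y1 | mOf L]) ω ≤ u1 (L ω))
    (hbdm1 : ∀ᵐ ω ∂μ, lm1 (L ω) ≤ (μ[Ym1 | mOf L]) ω ∧ (μ[Ym1 | mOf L]) ω ≤ um1 (L ω))
    -- pointwise identities relating the bounds
    (hlid : ∀ x, l x = l1 x - um1 x) (huid : ∀ x, u x = u1 x - lm1 x)
    -- weights
    (hω1 : ∀ x, 0 ≤ ω1 x) (hωm1 : ∀ x, 0 ≤ ωm1 x) (hωsum : ∀ x, ω1 x + ωm1 x = 1)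
    -- a treatment regime
    (D : 𝓛 → ℝ) (hD : Measurable D) (hDval : ∀ x, D x = 1 ∨ D x = -1) :
    (∫ ω, ω1 (L ω) * (l (L ω) * (if D (L ω) = 1 then 1 else 0) + lm1 (L ω))
        + ωm1 (L ω) * (-(u (L ω)) * (if D (L ω) = -1 then 1 else 0) + l1 (L ω)) ∂μ)
      ≤ (∫ ω, l1 (L ω) * (if D (L ω) = 1 then 1 else 0)
          + lm1 (L ω) * (if D (L ω) = -1 then 1 else 0) ∂μ)
    ∧ (∫ ω, l1 (L ω) * (if D (L ω) = 1 then 1 else 0)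
          + lm1 (L ω) * (if D (L ω) = -1 then 1 else 0) ∂μ)
      ≤ ∫ ω, Y1 ω * (if D (L ω) = 1 then 1 else 0)
          + Ym1 ω * (if D (L ω) = -1 then 1 else 0) ∂μ :=
  value_function_lower_bounds_general μ L hL Y1 Ym1 hY1int hYm1int l u l1 u1 lm1 um1 ω1 ωm1 hω1m
    hωm1m hlint huint hl1int hlm1int hbd1 hbdm1 hlid huid hω1 hωm1 hωsum D hD hDval
end

section
/- Let W be an integrable real random variable, A a {−1,+1}-valued random variable, and L a random variable valued in 𝓛. Then for every treatment regime 𝒟, E[ |W|·1{ sign(W)·A ≠ 𝒟(L) } ] = E[ W·1{ A ≠ 𝒟(L) } ] + E[ max(−W, 0) ], where sign(t) = 1 for t>0, −1 for t<0, and 0 for t=0. Since E[max(−W,0)] does not depend on 𝒟, a regime minimizes 𝒟 ↦ E[|W|·1{sign(W)·A ≠ 𝒟(L)}] over all measurable regimes if and only if it minimizes 𝒟 ↦ E[W·1{A ≠ 𝒟(L)}]. (Weight-flipping identity, Equation (2.8) of Section 2.3.) -/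
open MeasureTheory

lemma weight_flip_key
    {Ω 𝓛 : Type*} [MeasurableSpace Ω] [MeasurableSpace 𝓛]
    (μ : Measure Ω)
    (L : Ω → 𝓛) (hL : Measurable L)
    (A : Ω → ℝ) (hA : Measurable A) (hAval : ∀ ω, A ω = 1 ∨ A ω = -1)
    (W : Ω → ℝ) (hWm : Measurable W) (hW : Integrable W μ)
    (D : 𝓛 → ℝ) (hD : Measurable D) (hDval : ∀ x, D x = 1 ∨ D x = -1) :
    (∫ ω, |W ω| * (if Real.sign (W ω) * A ω ≠ D (L ω) then 1 else 0) ∂μ)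
      = (∫ ω, W ω * (if A ω ≠ D (L ω) then 1 else 0) ∂μ) + ∫ ω, max (-W ω) 0 ∂μ := by
  have hset : MeasurableSet {ω | A ω ≠ D (L ω)} :=
    (measurableSet_eq_fun hA (hD.comp hL)).compl
  have hind : Measurable fun ω => (if A ω ≠ D (L ω) then (1:ℝ) else 0) :=
    Measurable.ite hset measurable_const measurable_const
  have hg : Integrable (fun ω => W ω * (if A ω ≠ D (L ω) then 1 else 0)) μ := by
    refine hW.mono ((hWm.mul hind).aestronglyMeasurable) ?_
    filter_upwards with ω
    by_cases h : A ω ≠ D (L ω) <;> simp [h, abs_mul]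
  have hh : Integrable (fun ω => max (-W ω) 0) μ := hW.neg.pos_part
  have hpt : ∀ ω, |W ω| * (if Real.sign (W ω) * A ω ≠ D (L ω) then (1:ℝ) else 0)
      = W ω * (if A ω ≠ D (L ω) then 1 else 0) + max (-W ω) 0 := by
    intro ω
    rcases lt_trichotomy (W ω) 0 with hw | hw | hw
    · rw [Real.sign_of_neg hw, abs_of_neg hw,
        max_eq_left (neg_nonneg.mpr hw.le)]
      rcases hAval ω with ha | ha <;> rcases hDval (L ω) with hd | hd <;>
        rw [ha, hd] <;> norm_num
    · rw [hw]; rcases hAval ω with ha | ha <;> rcases hDval (L ω) with hd | hd <;>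
        rw [ha, hd] <;> norm_num
    · rw [Real.sign_of_pos hw, abs_of_pos hw,
        max_eq_right (neg_nonpos.mpr hw.le)]
      rcases hAval ω with ha | ha <;> rcases hDval (L ω) with hd | hd <;>
        rw [ha, hd] <;> norm_num
  calc (∫ ω, |W ω| * (if Real.sign (W ω) * A ω ≠ D (L ω) then 1 else 0) ∂μ)
      = ∫ ω, (W ω * (if A ω ≠ D (L ω) then 1 else 0) + max (-W ω) 0) ∂μ := by
        exact integral_congr_ae (Filter.Eventually.of_forall hpt)
    _ = _ := integral_add hg hh

/-- **Weight-flipping identity (Equation (2.8), Section 2.3).** For integrable `W`,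
`E[|W|·1{sign(W)·A ≠ D(L)}] = E[W·1{A ≠ D(L)}] + E[max(−W,0)]`; since the last term
does not depend on `D`, a regime minimizes `D ↦ E[|W|·1{sign(W)·A ≠ D(L)}]` over all
measurable regimes iff it minimizes `D ↦ E[W·1{A ≠ D(L)}]`. -/
theorem weight_flipping_identity
    {Ω 𝓛 : Type*} [MeasurableSpace Ω] [MeasurableSpace 𝓛]
    (μ : Measure Ω) [IsProbabilityMeasure μ]
    (L : Ω → 𝓛) (hL : Measurable L)
    (A : Ω → ℝ) (hA : Measurable A) (hAval : ∀ ω, A ω = 1 ∨ A ω = -1)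
    (W : Ω → ℝ) (hWm : Measurable W) (hW : Integrable W μ)
    (D : 𝓛 → ℝ) (hD : Measurable D) (hDval : ∀ x, D x = 1 ∨ D x = -1) :
    -- the identity
    ((∫ ω, |W ω| * (if Real.sign (W ω) * A ω ≠ D (L ω) then 1 else 0) ∂μ)
      = (∫ ω, W ω * (if A ω ≠ D (L ω) then 1 else 0) ∂μ) + ∫ ω, max (-W ω) 0 ∂μ)
    ∧ -- the consequence
    ((∀ D' : 𝓛 → ℝ, Measurable D' → (∀ x, D' x = 1 ∨ D' x = -1) →
        (∫ ω, |W ω| * (if Real.sign (W ω) * A ω ≠ D (L ω) then 1 else 0) ∂μ)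
          ≤ ∫ ω, |W ω| * (if Real.sign (W ω) * A ω ≠ D' (L ω) then 1 else 0) ∂μ)
      ↔ (∀ D' : 𝓛 → ℝ, Measurable D' → (∀ x, D' x = 1 ∨ D' x = -1) →
        (∫ ω, W ω * (if A ω ≠ D (L ω) then 1 else 0) ∂μ)
          ≤ ∫ ω, W ω * (if A ω ≠ D' (L ω) then 1 else 0) ∂μ)) := by
  have key := fun (D : 𝓛 → ℝ) (hD : Measurable D) (hDval : ∀ x, D x = 1 ∨ D x = -1) =>
    weight_flip_key μ L hL A hA hAval W hWm hW D hD hDval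
  refine ⟨key D hD hDval, ?_⟩
  constructor <;> intro h D' hD' hD'val <;>
    have h1 := key D hD hDval <;> have h2 := key D' hD' hD'val <;>
    have h3 := h D' hD' hD'val <;> linarith
end

section
/- Let Z and A be {−1,+1}-valued random variables, L a random variable valued in 𝓛, Y an integrable real random variable, and 𝒟 a treatment regime; assume IV positivity (c ≤ f(1|L) ≤ 1−c a.s.) and IV relevance (|δ(L)| ≥ c a.s.). Define m(z, L) := E[ A·Y·1{A=𝒟(L)} | Z=z, L ] and g(L) := Σ_{z ∈ {−1,1}} z·m(z,L)/δ(L). Then the augmentation term of the efficient influence function has mean zero: E[ Z·m(Z,L)/(f(Z|L)·δ(L)) − g(L) + Z·(A − E[A|Z,L])·g(L)/(2·f(Z|L)·δ(L)) ] = 0; equivalently, E[ Z·A·Y·1{A=𝒟(L)}/(δ(L)·f(Z|L)) − ( Z·m(Z,L)/(f(Z|L)·δ(L)) − g(L) + Z·(A−E[A|Z,L])·g(L)/(2·f(Z|L)·δ(L)) ) ] = 𝒱(𝒟), so the efficient influence function EIF_{𝒱(𝒟)} of Theorem S (thm:triply1) has mean zero. (Mean-zero property underlying Theorem S (thm:triply1).)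 -/
open MeasureTheory ProbabilityTheory

private lemma abs_div_le' {b x d : ℝ} (hb : 0 < b) (hd : b ≤ |d|) :
    |x / d| ≤ (1 / b) * |x| := by
  rw [abs_div, one_div, inv_mul_eq_div, div_le_div_iff₀ (hb.trans_le hd) hb]
  exact mul_le_mul_of_nonneg_left hd (abs_nonneg x)

private lemma abs_le_mul_abs' {b x f : ℝ} (hb : 0 < b) (hf : b ≤ f) :
    |x| ≤ (1 / b) * |x * f| := by
  rw [abs_mul, one_div, inv_mul_eq_div, le_div_iff₀ hb]
  exact mul_le_mul_of_nonneg_left (hf.trans (le_abs_self f)) (abs_nonneg x)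


private lemma bound_helper {c x d i C : ℝ} (hc : 0 < c) (hd : c * c ≤ |d|) (hi : |i| ≤ 1)
    (hxC : |x| ≤ C) : |x / d * i| ≤ 1 / (c * c) * C := by
  have h0 : |x / d * i| ≤ |x / d| := by
    rw [abs_mul]
    exact (mul_le_mul_of_nonneg_left hi (abs_nonneg _)).trans_eq (mul_one _)
  refine h0.trans ?_
  refine (abs_div_le' (by positivity) hd).trans ?_
  exact mul_le_mul_of_nonneg_left hxC (by positivity)

/-- Pull-out property: `∫ h·X = ∫ h·G` when `h` is `m`-measurable and `μ[X|m] = G` a.e. -/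
private lemma pull_out {Ω : Type*} {m : MeasurableSpace Ω} [m0 : MeasurableSpace Ω]
    (hm : m ≤ m0) (μ : Measure Ω) [IsFiniteMeasure μ] {h X G : Ω → ℝ}
    (hh : StronglyMeasurable[m] h) (hX : Integrable X μ)
    (hhX : Integrable (fun ω => h ω * X ω) μ)
    (hCE : μ[X|m] =ᵐ[μ] G) :
    ∫ ω, h ω * X ω ∂μ = ∫ ω, h ω * G ω ∂μ := by
  haveI := isFiniteMeasure_trim hm (μ := μ)
  have h1 : ∫ ω, h ω * X ω ∂μ = ∫ ω, (μ[(fun ω => h ω * X ω)|m]) ω ∂μ :=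
    (integral_condExp hm).symm
  rw [h1]
  refine integral_congr_ae ?_
  have h2 : μ[h * X|m] =ᵐ[μ] h * μ[X|m] :=
    condExp_mul_of_stronglyMeasurable_left hh hhX hX
  filter_upwards [h2, hCE] with ω hω hG
  calc (μ[(fun ω => h ω * X ω)|m]) ω = (μ[h * X|m]) ω := rfl
    _ = (h * μ[X|m]) ω := hω
    _ = h ω * G ω := by rw [Pi.mul_apply, hG]

set_option maxHeartbeats 2000000 in
/-- **Mean-zero property underlying Theorem S (thm:triply1).** With
`m(z,L) = E[A·Y·1{A=D(L)}|Z=z,L]`, `g(L) = Σ_z z·m(z,L)/δ(L)` and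
`E[A|Z,L] = Σ_z 1{Z=z}·E[A|Z=z,L]`, the augmentation term of the efficient
influence function has mean zero:
`E[Z·m(Z,L)/(f(Z|L)·δ(L)) − g(L) + Z·(A−E[A|Z,L])·g(L)/(2·f(Z|L)·δ(L))] = 0`;
equivalently, subtracting it from the IPW term leaves the value `𝒱(D)` unchanged. -/
theorem eif_augmentation_mean_zero
    {Ω 𝓛 : Type*} [MeasurableSpace Ω] [MeasurableSpace 𝓛]
    (μ : Measure Ω) [IsProbabilityMeasure μ]
    (L : Ω → 𝓛) (Z A Y : Ω → ℝ)
    (hL : Measurable L) (hZ : Measurable Z) (hA : Measurable A) (hYm : Measurable Y)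
    (hZval : ∀ ω, Z ω = 1 ∨ Z ω = -1) (hAval : ∀ ω, A ω = 1 ∨ A ω = -1)
    (hYint : Integrable Y μ)
    -- f(z|L) and IV positivity
    (fZ : ℝ → 𝓛 → ℝ) (hfZmeas : ∀ z, Measurable (fZ z))
    (hfZ : ∀ z ∈ ({1, -1} : Set ℝ),
      (μ[(fun ω => if Z ω = z then (1 : ℝ) else 0) | mOf L])
        =ᵐ[μ] fun ω => fZ z (L ω))
    (c : ℝ) (hc : 0 < c)
    (hpos : ∀ᵐ ω ∂μ, c ≤ fZ 1 (L ω) ∧ fZ 1 (L ω) ≤ 1 - c)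
    -- P(A = 1 | Z = z, L) and IV relevance
    (pA : ℝ → 𝓛 → ℝ) (hpAmeas : ∀ z, Measurable (pA z))
    (hpA : ∀ z ∈ ({1, -1} : Set ℝ),
      (μ[(fun ω => (if A ω = 1 then (1 : ℝ) else 0) * (if Z ω = z then 1 else 0)) | mOf L])
        =ᵐ[μ] fun ω => pA z (L ω) * fZ z (L ω))
    (hrel : ∀ᵐ ω ∂μ, c ≤ |pA 1 (L ω) - pA (-1) (L ω)|)
    -- a treatment regime
    (D : 𝓛 → ℝ) (hD : Measurable D) (hDval : ∀ x, D x = 1 ∨ D x = -1)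
    -- m(z,L) := E[A·Y·1{A=D(L)}|Z=z,L], by the usual factorization
    (mAY : ℝ → 𝓛 → ℝ) (hmAYmeas : ∀ z, Measurable (mAY z))
    (hmAY : ∀ z ∈ ({1, -1} : Set ℝ),
      (μ[(fun ω => A ω * Y ω * (if A ω = D (L ω) then 1 else 0) *
          (if Z ω = z then 1 else 0)) | mOf L])
        =ᵐ[μ] fun ω => mAY z (L ω) * fZ z (L ω))
    -- E[A|Z=z,L], by the usual factorization
    (eA : ℝ → 𝓛 → ℝ) (heAmeas : ∀ z, Measurable (eA z))
    (heA : ∀ z ∈ ({1, -1} : Set ℝ),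
      (μ[(fun ω => A ω * (if Z ω = z then 1 else 0)) | mOf L])
        =ᵐ[μ] fun ω => eA z (L ω) * fZ z (L ω)) :
    -- the augmentation term has mean zero
    ((∫ ω, Z ω * mAY (Z ω) (L ω) / (fZ (Z ω) (L ω) * (pA 1 (L ω) - pA (-1) (L ω)))
        - (mAY 1 (L ω) - mAY (-1) (L ω)) / (pA 1 (L ω) - pA (-1) (L ω))
        + Z ω * (A ω - eA (Z ω) (L ω)) *
          ((mAY 1 (L ω) - mAY (-1) (L ω)) / (pA 1 (L ω) - pA (-1) (L ω))) /
          (2 * fZ (Z ω) (L ω) * (pA 1 (L ω) - pA (-1) (L ω))) ∂μ) = 0)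
    ∧ -- equivalently, the augmented functional recovers 𝒱(D)
    ((∫ ω, Z ω * A ω * Y ω * (if A ω = D (L ω) then 1 else 0) /
          ((pA 1 (L ω) - pA (-1) (L ω)) * fZ (Z ω) (L ω))
        - (Z ω * mAY (Z ω) (L ω) / (fZ (Z ω) (L ω) * (pA 1 (L ω) - pA (-1) (L ω)))
          - (mAY 1 (L ω) - mAY (-1) (L ω)) / (pA 1 (L ω) - pA (-1) (L ω))
          + Z ω * (A ω - eA (Z ω) (L ω)) *
            ((mAY 1 (L ω) - mAY (-1) (L ω)) / (pA 1 (L ω) - pA (-1) (L ω))) /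
            (2 * fZ (Z ω) (L ω) * (pA 1 (L ω) - pA (-1) (L ω)))) ∂μ)
      = ∫ ω, Z ω * A ω * Y ω * (if A ω = D (L ω) then 1 else 0) /
          ((pA 1 (L ω) - pA (-1) (L ω)) * fZ (Z ω) (L ω)) ∂μ) := by
  have hm : mOf L ≤ ‹MeasurableSpace Ω› := hL.comap_le
  haveI : SigmaFinite (μ.trim hm) := (isFiniteMeasure_trim hm).toSigmaFinite
  have hLm : Measurable[mOf L] L := fun s hs => ⟨s, hs, rfl⟩
  have h1mem : (1:ℝ) ∈ ({1,-1} : Set ℝ) := by simp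
  have hm1mem : (-1:ℝ) ∈ ({1,-1} : Set ℝ) := by simp
  -- abbreviations
  -- measurability of indicators
  have hZind : ∀ z : ℝ, Measurable (fun ω => if Z ω = z then (1:ℝ) else 0) := fun z =>
    Measurable.ite (hZ (measurableSet_singleton z)) measurable_const measurable_const
  have hIind : ∀ z : ℝ, Integrable (fun ω => if Z ω = z then (1:ℝ) else 0) μ := by
    intro z
    refine Integrable.mono' (integrable_const (1:ℝ)) (hZind z).aestronglyMeasurable ?_
    filter_upwards with ω
    split_ifs <;> simp
  have hIAind : ∀ z : ℝ, Integrable (fun ω => A ω * (if Z ω = z then (1:ℝ) else 0)) μ := by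
    intro z
    refine Integrable.mono' (integrable_const (1:ℝ)) (hA.mul (hZind z)).aestronglyMeasurable ?_
    filter_upwards with ω
    rcases hAval ω with h | h <;> rw [Real.norm_eq_abs, h] <;> split_ifs <;> norm_num
  -- f(-1|L) = 1 - f(1|L) a.e.
  have hfm1 : ∀ᵐ ω ∂μ, fZ (-1) (L ω) = 1 - fZ 1 (L ω) := by
    have hadd := condExp_add (μ := μ) (m := mOf L) (hIind 1) (hIind (-1))
    have hone : ((fun ω => if Z ω = 1 then (1:ℝ) else 0) +
        (fun ω => if Z ω = (-1:ℝ) then (1:ℝ) else 0)) = (fun _ => (1:ℝ)) := by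
      funext ω
      rcases hZval ω with h | h <;> simp [Pi.add_apply, h] <;> norm_num
    rw [hone, condExp_const hm] at hadd
    filter_upwards [hadd, hfZ 1 h1mem, hfZ (-1) hm1mem] with ω h0 h1 h2
    rw [Pi.add_apply, h1, h2] at h0
    linarith [h0.symm]
  -- bounds on fZ z
  have hFz : ∀ z ∈ ({1,-1} : Set ℝ), ∀ᵐ ω ∂μ, c ≤ fZ z (L ω) ∧ fZ z (L ω) ≤ 1 - c := by
    intro z hz
    rcases hz with h | h
    · subst h; exact hpos
    · simp only [Set.mem_singleton_iff] at h; subst h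
      filter_upwards [hpos, hfm1] with ω h1 h2
      rw [h2]; exact ⟨by linarith [h1.2], by linarith [h1.1]⟩
  -- bound on eA
  have heAbd : ∀ z ∈ ({1,-1} : Set ℝ), ∀ᵐ ω ∂μ, |eA z (L ω)| ≤ 1 / c := by
    intro z hz
    have h1 : ∀ᵐ ω ∂μ, |A ω * (if Z ω = z then (1:ℝ) else 0)| ≤ ((1 : NNReal) : ℝ) := by
      filter_upwards with ω
      rcases hAval ω with h | h <;> rw [h] <;> split_ifs <;> norm_num
    have h2 := ae_bdd_condExp_of_ae_bdd (m := mOf L) h1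
    filter_upwards [h2, heA z hz, hFz z hz] with ω hb he hF
    rw [he] at hb
    have h3 := abs_le_mul_abs' hc hF.1 (x := eA z (L ω))
    calc |eA z (L ω)| ≤ (1/c) * |eA z (L ω) * fZ z (L ω)| := h3
      _ ≤ (1/c) * 1 := by
          refine mul_le_mul_of_nonneg_left ?_ (by positivity)
          simpa using hb
      _ = 1 / c := mul_one _
  -- |z| = 1 helper
  have habsz : ∀ z ∈ ({1,-1} : Set ℝ), |z| = 1 := by
    intro z hz
    rcases hz with h | h
    · simp [h]
    · simp only [Set.mem_singleton_iff] at h; simp [h]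
  -- integrability of M z = mAY z (L) * fZ z (L)
  have hMint : ∀ z ∈ ({1,-1} : Set ℝ),
      Integrable (fun ω => mAY z (L ω) * fZ z (L ω)) μ := by
    intro z hz
    exact integrable_condExp.congr (hmAY z hz)
  -- integrability of Q z = z * mAY z (L) / δ(L)
  have hQint : ∀ z ∈ ({1,-1} : Set ℝ),
      Integrable (fun ω => z * mAY z (L ω) / (pA 1 (L ω) - pA (-1) (L ω))) μ := by
    intro z hz
    refine Integrable.mono' (((hMint z hz).abs.const_mul (1/c)).const_mul (1/c))
      ((((measurable_const.mul ((hmAYmeas z).comp hL))).div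
        (((hpAmeas 1).comp hL).sub ((hpAmeas (-1)).comp hL))).aestronglyMeasurable) ?_
    filter_upwards [hFz z hz, hrel] with ω hF hδ
    rw [Real.norm_eq_abs]
    calc |z * mAY z (L ω) / (pA 1 (L ω) - pA (-1) (L ω))|
        ≤ (1/c) * |z * mAY z (L ω)| := abs_div_le' hc hδ
      _ = (1/c) * |mAY z (L ω)| := by rw [abs_mul, habsz z hz, one_mul]
      _ ≤ (1/c) * ((1/c) * |mAY z (L ω) * fZ z (L ω)|) :=
          mul_le_mul_of_nonneg_left (abs_le_mul_abs' hc hF.1) (by positivity)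
  -- integrability of G
  have hGint : Integrable (fun ω =>
      (mAY 1 (L ω) - mAY (-1) (L ω)) / (pA 1 (L ω) - pA (-1) (L ω))) μ := by
    refine ((hQint 1 h1mem).add (hQint (-1) hm1mem)).congr (Filter.Eventually.of_forall ?_)
    intro ω; simp only [Pi.add_apply]; ring
  -- integrability of the three piece families
  have hp1int : ∀ z ∈ ({1,-1} : Set ℝ), Integrable (fun ω =>
      (z * mAY z (L ω) / (fZ z (L ω) * (pA 1 (L ω) - pA (-1) (L ω)))) *
        (if Z ω = z then (1:ℝ) else 0)) μ := by
    intro z hz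
    refine Integrable.mono' (((hMint z hz).abs.const_mul (1/c)).const_mul (1/(c*c)))
      (((((measurable_const.mul ((hmAYmeas z).comp hL))).div
        ((((hfZmeas z).comp hL)).mul
          (((hpAmeas 1).comp hL).sub ((hpAmeas (-1)).comp hL)))).mul
            (hZind z)).aestronglyMeasurable) ?_
    filter_upwards [hFz z hz, hrel] with ω hF hδ
    rw [Real.norm_eq_abs]
    have hFd : c * c ≤ |fZ z (L ω) * (pA 1 (L ω) - pA (-1) (L ω))| := by
      rw [abs_mul]
      exact mul_le_mul (hF.1.trans (le_abs_self _)) hδ hc.le (abs_nonneg _)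
    have hI : |if Z ω = z then (1:ℝ) else 0| ≤ 1 := by split_ifs <;> norm_num
    refine bound_helper hc hFd hI ?_
    rw [abs_mul, habsz z hz, one_mul]
    exact abs_le_mul_abs' hc hF.1
  have hp2int : ∀ z ∈ ({1,-1} : Set ℝ), Integrable (fun ω =>
      (z * ((mAY 1 (L ω) - mAY (-1) (L ω)) / (pA 1 (L ω) - pA (-1) (L ω))) /
        (2 * fZ z (L ω) * (pA 1 (L ω) - pA (-1) (L ω)))) *
        (A ω * (if Z ω = z then (1:ℝ) else 0))) μ := by
    intro z hz
    have hGm : Measurable (fun ω =>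
        (mAY 1 (L ω) - mAY (-1) (L ω)) / (pA 1 (L ω) - pA (-1) (L ω))) :=
      (((hmAYmeas 1).comp hL).sub ((hmAYmeas (-1)).comp hL)).div
        (((hpAmeas 1).comp hL).sub ((hpAmeas (-1)).comp hL))
    refine Integrable.mono' (hGint.abs.const_mul (1/(c*c)))
      ((((measurable_const.mul hGm).div
        ((measurable_const.mul ((hfZmeas z).comp hL)).mul
          (((hpAmeas 1).comp hL).sub ((hpAmeas (-1)).comp hL)))).mul
            (hA.mul (hZind z))).aestronglyMeasurable) ?_
    filter_upwards [hFz z hz, hrel] with ω hF hδ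
    rw [Real.norm_eq_abs]
    have hFd : c * c ≤ |2 * fZ z (L ω) * (pA 1 (L ω) - pA (-1) (L ω))| := by
      rw [abs_mul, abs_mul, abs_two]
      have k1 : c * c ≤ |fZ z (L ω)| * |pA 1 (L ω) - pA (-1) (L ω)| :=
        mul_le_mul (hF.1.trans (le_abs_self _)) hδ hc.le (abs_nonneg _)
      nlinarith [mul_nonneg (abs_nonneg (fZ z (L ω)))
        (abs_nonneg (pA 1 (L ω) - pA (-1) (L ω)))]
    have hI : |A ω * (if Z ω = z then (1:ℝ) else 0)| ≤ 1 := by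
      rcases hAval ω with h | h <;> rw [h] <;> split_ifs <;> norm_num
    refine bound_helper hc hFd hI ?_
    rw [abs_mul, habsz z hz, one_mul]
  have hp3int : ∀ z ∈ ({1,-1} : Set ℝ), Integrable (fun ω =>
      (z * eA z (L ω) * ((mAY 1 (L ω) - mAY (-1) (L ω)) / (pA 1 (L ω) - pA (-1) (L ω))) /
        (2 * fZ z (L ω) * (pA 1 (L ω) - pA (-1) (L ω)))) *
        (if Z ω = z then (1:ℝ) else 0)) μ := by
    intro z hz
    have hGm : Measurable (fun ω =>
        (mAY 1 (L ω) - mAY (-1) (L ω)) / (pA 1 (L ω) - pA (-1) (L ω))) :=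
      (((hmAYmeas 1).comp hL).sub ((hmAYmeas (-1)).comp hL)).div
        (((hpAmeas 1).comp hL).sub ((hpAmeas (-1)).comp hL))
    refine Integrable.mono' ((hGint.abs.const_mul (1/c)).const_mul (1/(c*c)))
      (((((measurable_const.mul ((heAmeas z).comp hL)).mul hGm).div
        ((measurable_const.mul ((hfZmeas z).comp hL)).mul
          (((hpAmeas 1).comp hL).sub ((hpAmeas (-1)).comp hL)))).mul
            (hZind z)).aestronglyMeasurable) ?_
    filter_upwards [hFz z hz, hrel, heAbd z hz] with ω hF hδ heAω
    rw [Real.norm_eq_abs]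
    have hFd : c * c ≤ |2 * fZ z (L ω) * (pA 1 (L ω) - pA (-1) (L ω))| := by
      rw [abs_mul, abs_mul, abs_two]
      have k1 : c * c ≤ |fZ z (L ω)| * |pA 1 (L ω) - pA (-1) (L ω)| :=
        mul_le_mul (hF.1.trans (le_abs_self _)) hδ hc.le (abs_nonneg _)
      nlinarith [mul_nonneg (abs_nonneg (fZ z (L ω)))
        (abs_nonneg (pA 1 (L ω) - pA (-1) (L ω)))]
    have hI : |if Z ω = z then (1:ℝ) else 0| ≤ 1 := by split_ifs <;> norm_num
    refine bound_helper hc hFd hI ?_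
    rw [abs_mul, abs_mul, habsz z hz, one_mul]
    exact mul_le_mul_of_nonneg_right heAω (abs_nonneg _)
  -- the three pull-out computations
  have hP1 : ∀ z ∈ ({1,-1} : Set ℝ),
      (∫ ω, (z * mAY z (L ω) / (fZ z (L ω) * (pA 1 (L ω) - pA (-1) (L ω)))) *
        (if Z ω = z then (1:ℝ) else 0) ∂μ)
      = ∫ ω, z * mAY z (L ω) / (pA 1 (L ω) - pA (-1) (L ω)) ∂μ := by
    intro z hz
    have hh : StronglyMeasurable[mOf L] (fun ω =>
        z * mAY z (L ω) / (fZ z (L ω) * (pA 1 (L ω) - pA (-1) (L ω)))) := by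
      refine Measurable.stronglyMeasurable ?_
      exact (measurable_const.mul ((hmAYmeas z).comp hLm)).div
        (((hfZmeas z).comp hLm).mul (((hpAmeas 1).comp hLm).sub ((hpAmeas (-1)).comp hLm)))
    refine (pull_out hm μ hh (hIind z) (hp1int z hz) (hfZ z hz)).trans ?_
    refine integral_congr_ae ?_
    filter_upwards [hFz z hz, hrel] with ω hF hδ
    have hF0 : fZ z (L ω) ≠ 0 := ne_of_gt (hc.trans_le hF.1)
    have hd0 : pA 1 (L ω) - pA (-1) (L ω) ≠ 0 := by
      intro h; rw [h, abs_zero] at hδ; linarith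
    field_simp
  have hP2 : ∀ z ∈ ({1,-1} : Set ℝ),
      (∫ ω, (z * ((mAY 1 (L ω) - mAY (-1) (L ω)) / (pA 1 (L ω) - pA (-1) (L ω))) /
        (2 * fZ z (L ω) * (pA 1 (L ω) - pA (-1) (L ω)))) *
        (A ω * (if Z ω = z then (1:ℝ) else 0)) ∂μ)
      = ∫ ω, z * eA z (L ω) *
          ((mAY 1 (L ω) - mAY (-1) (L ω)) / (pA 1 (L ω) - pA (-1) (L ω))) /
          (2 * (pA 1 (L ω) - pA (-1) (L ω))) ∂μ := by
    intro z hz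
    have hh : StronglyMeasurable[mOf L] (fun ω =>
        z * ((mAY 1 (L ω) - mAY (-1) (L ω)) / (pA 1 (L ω) - pA (-1) (L ω))) /
          (2 * fZ z (L ω) * (pA 1 (L ω) - pA (-1) (L ω)))) := by
      refine Measurable.stronglyMeasurable ?_
      exact (measurable_const.mul ((((hmAYmeas 1).comp hLm).sub ((hmAYmeas (-1)).comp hLm)).div
          (((hpAmeas 1).comp hLm).sub ((hpAmeas (-1)).comp hLm)))).div
        ((measurable_const.mul ((hfZmeas z).comp hLm)).mul
          (((hpAmeas 1).comp hLm).sub ((hpAmeas (-1)).comp hLm)))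
    refine (pull_out hm μ hh (hIAind z) (hp2int z hz) (heA z hz)).trans ?_
    refine integral_congr_ae ?_
    filter_upwards [hFz z hz, hrel] with ω hF hδ
    have hF0 : fZ z (L ω) ≠ 0 := ne_of_gt (hc.trans_le hF.1)
    have hd0 : pA 1 (L ω) - pA (-1) (L ω) ≠ 0 := by
      intro h; rw [h, abs_zero] at hδ; linarith
    field_simp
  have hP3 : ∀ z ∈ ({1,-1} : Set ℝ),
      (∫ ω, (z * eA z (L ω) *
          ((mAY 1 (L ω) - mAY (-1) (L ω)) / (pA 1 (L ω) - pA (-1) (L ω))) /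
        (2 * fZ z (L ω) * (pA 1 (L ω) - pA (-1) (L ω)))) *
        (if Z ω = z then (1:ℝ) else 0) ∂μ)
      = ∫ ω, z * eA z (L ω) *
          ((mAY 1 (L ω) - mAY (-1) (L ω)) / (pA 1 (L ω) - pA (-1) (L ω))) /
          (2 * (pA 1 (L ω) - pA (-1) (L ω))) ∂μ := by
    intro z hz
    have hh : StronglyMeasurable[mOf L] (fun ω =>
        z * eA z (L ω) *
          ((mAY 1 (L ω) - mAY (-1) (L ω)) / (pA 1 (L ω) - pA (-1) (L ω))) /
          (2 * fZ z (L ω) * (pA 1 (L ω) - pA (-1) (L ω)))) := by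
      refine Measurable.stronglyMeasurable ?_
      exact ((measurable_const.mul ((heAmeas z).comp hLm)).mul
          ((((hmAYmeas 1).comp hLm).sub ((hmAYmeas (-1)).comp hLm)).div
            (((hpAmeas 1).comp hLm).sub ((hpAmeas (-1)).comp hLm)))).div
        ((measurable_const.mul ((hfZmeas z).comp hLm)).mul
          (((hpAmeas 1).comp hLm).sub ((hpAmeas (-1)).comp hLm)))
    refine (pull_out hm μ hh (hIind z) (hp3int z hz) (hfZ z hz)).trans ?_
    refine integral_congr_ae ?_
    filter_upwards [hFz z hz, hrel] with ω hF hδ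
    have hF0 : fZ z (L ω) ≠ 0 := ne_of_gt (hc.trans_le hF.1)
    have hd0 : pA 1 (L ω) - pA (-1) (L ω) ≠ 0 := by
      intro h; rw [h, abs_zero] at hδ; linarith
    field_simp
  -- pointwise decomposition of the augmentation term
  have hpt : ∀ ω,
      Z ω * mAY (Z ω) (L ω) / (fZ (Z ω) (L ω) * (pA 1 (L ω) - pA (-1) (L ω)))
        - (mAY 1 (L ω) - mAY (-1) (L ω)) / (pA 1 (L ω) - pA (-1) (L ω))
        + Z ω * (A ω - eA (Z ω) (L ω)) *
          ((mAY 1 (L ω) - mAY (-1) (L ω)) / (pA 1 (L ω) - pA (-1) (L ω))) /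
          (2 * fZ (Z ω) (L ω) * (pA 1 (L ω) - pA (-1) (L ω)))
      = ((((1:ℝ) * mAY 1 (L ω) / (fZ 1 (L ω) * (pA 1 (L ω) - pA (-1) (L ω)))) *
            (if Z ω = (1:ℝ) then (1:ℝ) else 0)
          + ((1:ℝ) * ((mAY 1 (L ω) - mAY (-1) (L ω)) / (pA 1 (L ω) - pA (-1) (L ω))) /
              (2 * fZ 1 (L ω) * (pA 1 (L ω) - pA (-1) (L ω)))) *
            (A ω * (if Z ω = (1:ℝ) then (1:ℝ) else 0))
          - ((1:ℝ) * eA 1 (L ω) *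
              ((mAY 1 (L ω) - mAY (-1) (L ω)) / (pA 1 (L ω) - pA (-1) (L ω))) /
              (2 * fZ 1 (L ω) * (pA 1 (L ω) - pA (-1) (L ω)))) *
            (if Z ω = (1:ℝ) then (1:ℝ) else 0))
        + (((-1:ℝ) * mAY (-1) (L ω) / (fZ (-1) (L ω) * (pA 1 (L ω) - pA (-1) (L ω)))) *
            (if Z ω = (-1:ℝ) then (1:ℝ) else 0)
          + ((-1:ℝ) * ((mAY 1 (L ω) - mAY (-1) (L ω)) / (pA 1 (L ω) - pA (-1) (L ω))) /
              (2 * fZ (-1) (L ω) * (pA 1 (L ω) - pA (-1) (L ω)))) *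
            (A ω * (if Z ω = (-1:ℝ) then (1:ℝ) else 0))
          - ((-1:ℝ) * eA (-1) (L ω) *
              ((mAY 1 (L ω) - mAY (-1) (L ω)) / (pA 1 (L ω) - pA (-1) (L ω))) /
              (2 * fZ (-1) (L ω) * (pA 1 (L ω) - pA (-1) (L ω)))) *
            (if Z ω = (-1:ℝ) then (1:ℝ) else 0)))
        - (mAY 1 (L ω) - mAY (-1) (L ω)) / (pA 1 (L ω) - pA (-1) (L ω)) := by
    intro ω
    rcases hZval ω with h | h <;> rw [h] <;> norm_num <;> ring
  -- per-z integrability of the grouped pieces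
  have hB1 : Integrable (fun ω =>
      (((1:ℝ) * mAY 1 (L ω) / (fZ 1 (L ω) * (pA 1 (L ω) - pA (-1) (L ω)))) *
          (if Z ω = (1:ℝ) then (1:ℝ) else 0)
        + ((1:ℝ) * ((mAY 1 (L ω) - mAY (-1) (L ω)) / (pA 1 (L ω) - pA (-1) (L ω))) /
            (2 * fZ 1 (L ω) * (pA 1 (L ω) - pA (-1) (L ω)))) *
          (A ω * (if Z ω = (1:ℝ) then (1:ℝ) else 0))
        - ((1:ℝ) * eA 1 (L ω) *
            ((mAY 1 (L ω) - mAY (-1) (L ω)) / (pA 1 (L ω) - pA (-1) (L ω))) /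
            (2 * fZ 1 (L ω) * (pA 1 (L ω) - pA (-1) (L ω)))) *
          (if Z ω = (1:ℝ) then (1:ℝ) else 0))) μ :=
    ((hp1int 1 h1mem).add (hp2int 1 h1mem)).sub (hp3int 1 h1mem)
  have hBm : Integrable (fun ω =>
      (((-1:ℝ) * mAY (-1) (L ω) / (fZ (-1) (L ω) * (pA 1 (L ω) - pA (-1) (L ω)))) *
          (if Z ω = (-1:ℝ) then (1:ℝ) else 0)
        + ((-1:ℝ) * ((mAY 1 (L ω) - mAY (-1) (L ω)) / (pA 1 (L ω) - pA (-1) (L ω))) /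
            (2 * fZ (-1) (L ω) * (pA 1 (L ω) - pA (-1) (L ω)))) *
          (A ω * (if Z ω = (-1:ℝ) then (1:ℝ) else 0))
        - ((-1:ℝ) * eA (-1) (L ω) *
            ((mAY 1 (L ω) - mAY (-1) (L ω)) / (pA 1 (L ω) - pA (-1) (L ω))) /
            (2 * fZ (-1) (L ω) * (pA 1 (L ω) - pA (-1) (L ω)))) *
          (if Z ω = (-1:ℝ) then (1:ℝ) else 0))) μ :=
    ((hp1int (-1) hm1mem).add (hp2int (-1) hm1mem)).sub (hp3int (-1) hm1mem)
  have hB1s : Integrable (fun ω =>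
      ((1:ℝ) * mAY 1 (L ω) / (fZ 1 (L ω) * (pA 1 (L ω) - pA (-1) (L ω)))) *
          (if Z ω = (1:ℝ) then (1:ℝ) else 0)
        + ((1:ℝ) * ((mAY 1 (L ω) - mAY (-1) (L ω)) / (pA 1 (L ω) - pA (-1) (L ω))) /
            (2 * fZ 1 (L ω) * (pA 1 (L ω) - pA (-1) (L ω)))) *
          (A ω * (if Z ω = (1:ℝ) then (1:ℝ) else 0))) μ :=
    (hp1int 1 h1mem).add (hp2int 1 h1mem)
  have hBms : Integrable (fun ω =>
      (((-1):ℝ) * mAY (-1) (L ω) / (fZ (-1) (L ω) * (pA 1 (L ω) - pA (-1) (L ω)))) *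
          (if Z ω = ((-1):ℝ) then (1:ℝ) else 0)
        + (((-1):ℝ) * ((mAY 1 (L ω) - mAY (-1) (L ω)) / (pA 1 (L ω) - pA (-1) (L ω))) /
            (2 * fZ (-1) (L ω) * (pA 1 (L ω) - pA (-1) (L ω)))) *
          (A ω * (if Z ω = ((-1):ℝ) then (1:ℝ) else 0))) μ :=
    (hp1int (-1) hm1mem).add (hp2int (-1) hm1mem)
  have hBsum : Integrable (fun ω =>
      (((1:ℝ) * mAY 1 (L ω) / (fZ 1 (L ω) * (pA 1 (L ω) - pA (-1) (L ω)))) *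
          (if Z ω = (1:ℝ) then (1:ℝ) else 0)
        + ((1:ℝ) * ((mAY 1 (L ω) - mAY (-1) (L ω)) / (pA 1 (L ω) - pA (-1) (L ω))) /
            (2 * fZ 1 (L ω) * (pA 1 (L ω) - pA (-1) (L ω)))) *
          (A ω * (if Z ω = (1:ℝ) then (1:ℝ) else 0))
        - ((1:ℝ) * eA 1 (L ω) *
            ((mAY 1 (L ω) - mAY (-1) (L ω)) / (pA 1 (L ω) - pA (-1) (L ω))) /
            (2 * fZ 1 (L ω) * (pA 1 (L ω) - pA (-1) (L ω)))) *
          (if Z ω = (1:ℝ) then (1:ℝ) else 0))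
      + ((((-1):ℝ) * mAY (-1) (L ω) / (fZ (-1) (L ω) * (pA 1 (L ω) - pA (-1) (L ω)))) *
          (if Z ω = ((-1):ℝ) then (1:ℝ) else 0)
        + (((-1):ℝ) * ((mAY 1 (L ω) - mAY (-1) (L ω)) / (pA 1 (L ω) - pA (-1) (L ω))) /
            (2 * fZ (-1) (L ω) * (pA 1 (L ω) - pA (-1) (L ω)))) *
          (A ω * (if Z ω = ((-1):ℝ) then (1:ℝ) else 0))
        - (((-1):ℝ) * eA (-1) (L ω) *
            ((mAY 1 (L ω) - mAY (-1) (L ω)) / (pA 1 (L ω) - pA (-1) (L ω))) /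
            (2 * fZ (-1) (L ω) * (pA 1 (L ω) - pA (-1) (L ω)))) *
          (if Z ω = ((-1):ℝ) then (1:ℝ) else 0))) μ :=
    hB1.add hBm
  -- sum of the two leading integrals equals ∫ g
  have hJ : (∫ ω, (1:ℝ) * mAY 1 (L ω) / (pA 1 (L ω) - pA (-1) (L ω)) ∂μ)
      + (∫ ω, (-1:ℝ) * mAY (-1) (L ω) / (pA 1 (L ω) - pA (-1) (L ω)) ∂μ)
      = ∫ ω, (mAY 1 (L ω) - mAY (-1) (L ω)) / (pA 1 (L ω) - pA (-1) (L ω)) ∂μ := by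
    rw [← integral_add (hQint 1 h1mem) (hQint (-1) hm1mem)]
    exact integral_congr_ae (Filter.Eventually.of_forall fun ω => by ring)
  -- the augmentation term has mean zero
  have hzero : (∫ ω, Z ω * mAY (Z ω) (L ω) /
        (fZ (Z ω) (L ω) * (pA 1 (L ω) - pA (-1) (L ω)))
      - (mAY 1 (L ω) - mAY (-1) (L ω)) / (pA 1 (L ω) - pA (-1) (L ω))
      + Z ω * (A ω - eA (Z ω) (L ω)) *
        ((mAY 1 (L ω) - mAY (-1) (L ω)) / (pA 1 (L ω) - pA (-1) (L ω))) /
        (2 * fZ (Z ω) (L ω) * (pA 1 (L ω) - pA (-1) (L ω))) ∂μ) = 0 := by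
    rw [integral_congr_ae (Filter.Eventually.of_forall hpt)]
    rw [integral_sub hBsum hGint, integral_add hB1 hBm,
      integral_sub hB1s (hp3int 1 h1mem),
      integral_add (hp1int 1 h1mem) (hp2int 1 h1mem),
      integral_sub hBms (hp3int (-1) hm1mem),
      integral_add (hp1int (-1) hm1mem) (hp2int (-1) hm1mem)]
    have e11 := hP1 1 h1mem
    have e1m := hP1 (-1) hm1mem
    have e21 := hP2 1 h1mem
    have e2m := hP2 (-1) hm1mem
    have e31 := hP3 1 h1mem
    have e3m := hP3 (-1) hm1mem
    linarith [e11, e1m, e21, e2m, e31, e3m, hJ]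
  refine ⟨hzero, ?_⟩
  -- integrability of the full augmentation term
  have hAugInt : Integrable (fun ω => Z ω * mAY (Z ω) (L ω) /
        (fZ (Z ω) (L ω) * (pA 1 (L ω) - pA (-1) (L ω)))
      - (mAY 1 (L ω) - mAY (-1) (L ω)) / (pA 1 (L ω) - pA (-1) (L ω))
      + Z ω * (A ω - eA (Z ω) (L ω)) *
        ((mAY 1 (L ω) - mAY (-1) (L ω)) / (pA 1 (L ω) - pA (-1) (L ω))) /
        (2 * fZ (Z ω) (L ω) * (pA 1 (L ω) - pA (-1) (L ω)))) μ :=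
    ((hB1.add hBm).sub hGint).congr
      (Filter.Eventually.of_forall fun ω => (hpt ω).symm)
  -- integrability of the IPW term
  have hfZswitch : (fun ω => fZ (Z ω) (L ω))
      = (fun ω => if Z ω = 1 then fZ 1 (L ω) else fZ (-1) (L ω)) := by
    funext ω
    rcases hZval ω with h | h
    · rw [h, if_pos rfl]
    · rw [h, if_neg (by norm_num)]
  have hIPWmeas : Measurable (fun ω => Z ω * A ω * Y ω * (if A ω = D (L ω) then (1:ℝ) else 0) /
      ((pA 1 (L ω) - pA (-1) (L ω)) * fZ (Z ω) (L ω))) := by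
    have hnum : Measurable (fun ω =>
        Z ω * A ω * Y ω * (if A ω = D (L ω) then (1:ℝ) else 0)) :=
      (((hZ.mul hA)).mul hYm).mul (Measurable.ite
        (measurableSet_eq_fun hA (hD.comp hL)) measurable_const measurable_const)
    have hden : Measurable (fun ω => (pA 1 (L ω) - pA (-1) (L ω)) * fZ (Z ω) (L ω)) := by
      refine (((hpAmeas 1).comp hL).sub ((hpAmeas (-1)).comp hL)).mul ?_
      rw [hfZswitch]
      exact Measurable.ite (hZ (measurableSet_singleton 1))
        ((hfZmeas 1).comp hL) ((hfZmeas (-1)).comp hL)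
    exact hnum.div hden
  have hIPWint : Integrable (fun ω =>
      Z ω * A ω * Y ω * (if A ω = D (L ω) then (1:ℝ) else 0) /
        ((pA 1 (L ω) - pA (-1) (L ω)) * fZ (Z ω) (L ω))) μ := by
    refine Integrable.mono' (hYint.abs.const_mul (1/(c*c)))
      hIPWmeas.aestronglyMeasurable ?_
    filter_upwards [hpos, hfm1, hrel] with ω h1 h2 hδ
    have hFZ : c ≤ fZ (Z ω) (L ω) := by
      rcases hZval ω with h | h
      · rw [h]; exact h1.1
      · rw [h, h2]; linarith [h1.2]
    have hd : c * c ≤ |(pA 1 (L ω) - pA (-1) (L ω)) * fZ (Z ω) (L ω)| := by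
      rw [abs_mul]
      exact mul_le_mul hδ (hFZ.trans (le_abs_self _)) hc.le (abs_nonneg _)
    rw [Real.norm_eq_abs]
    have hnb : |Z ω * A ω * Y ω * (if A ω = D (L ω) then (1:ℝ) else 0)| ≤ |Y ω| := by
      rcases hZval ω with hz1 | hz1 <;> rcases hAval ω with ha1 | ha1 <;>
        rw [hz1, ha1] <;> split_ifs <;> simp [abs_mul] <;> positivity
    calc |Z ω * A ω * Y ω * (if A ω = D (L ω) then (1:ℝ) else 0) /
          ((pA 1 (L ω) - pA (-1) (L ω)) * fZ (Z ω) (L ω))|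
        ≤ (1/(c*c)) * |Z ω * A ω * Y ω * (if A ω = D (L ω) then (1:ℝ) else 0)| :=
          abs_div_le' (by positivity) hd
      _ ≤ 1/(c*c) * |Y ω| := mul_le_mul_of_nonneg_left hnb (by positivity)
  rw [integral_sub hIPWint hAugInt, hzero, sub_zero]
end
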